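/- arXiv:2203.05139 — 14 statements merged into one kernel-verified Lean document; each statement's English description precedes it below -/
import Mathlib

section
/- The function G(·,·;β) satisfies: (i) 𝒜G(x₁,x₂;β) − δG(x₁,x₂;β) = 0 for all x₁, x₂ > 0; (ii) G(α₀x₂, x₂;β) = 0 for all x₂ > 0; and (iii) ∂G/∂x₁ (βx₂, x₂;β) = 1 for all x₂ > 0. -/
/-- The generator 𝒜 of the bivariate geometric Brownian motion, acting on
`f : ℝ → ℝ → ℝ` at the point `(x₁, x₂)`. -/
noncomputable def gen (μA μL σA σL ρ : ℝ) (f : ℝ → ℝ → ℝ) (x₁ x₂ : ℝ) : ℝ :=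
  μA * x₁ * deriv (fun t => f t x₂) x₁
  + μL * x₂ * deriv (fun t => f x₁ t) x₂
  + (1 / 2) * σA ^ 2 * x₁ ^ 2 * deriv (deriv (fun t => f t x₂)) x₁
  + (1 / 2) * σL ^ 2 * x₂ ^ 2 * deriv (deriv (fun t => f x₁ t)) x₂
  + ρ * σA * σL * x₁ * x₂ * deriv (fun u => deriv (fun t => f t u) x₁) x₂

/-- The value function `G(x₁, x₂; β)` of the barrier strategy with barrier `β`
and ruin level `α₀`. -/
noncomputable def Gb (α₀ ζ₁ ζ₂ β x₁ x₂ : ℝ) : ℝ :=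
  α₀ * x₂ * ((x₁ / (α₀ * x₂)) ^ ζ₁ - (x₁ / (α₀ * x₂)) ^ ζ₂) /
    (ζ₁ * (β / α₀) ^ (ζ₁ - 1) - ζ₂ * (β / α₀) ^ (ζ₂ - 1))


open Real Filter Topology


noncomputable def DD (α₀ ζ₁ ζ₂ β : ℝ) : ℝ :=
  ζ₁ * (β / α₀) ^ (ζ₁ - 1) - ζ₂ * (β / α₀) ^ (ζ₂ - 1)

lemma rsub1 {x : ℝ} (hx : 0 < x) (ζ : ℝ) : x ^ (ζ - 1) = x ^ ζ / x := by
  rw [Real.rpow_sub hx, Real.rpow_one]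

lemma rsub1' {x : ℝ} (hx : 0 < x) (ζ : ℝ) : x ^ (1 - ζ) = x / x ^ ζ := by
  rw [Real.rpow_sub hx, Real.rpow_one]

lemma Gb_pt (α₀ ζ₁ ζ₂ β : ℝ) (hα₀ : 0 < α₀) {x₁ x₂ : ℝ} (hx₁ : 0 < x₁) (hx₂ : 0 < x₂) :
    Gb α₀ ζ₁ ζ₂ β x₁ x₂ =
      (α₀ ^ (1 - ζ₁) * x₂ ^ (1 - ζ₁) / DD α₀ ζ₁ ζ₂ β) * x₁ ^ ζ₁
    - (α₀ ^ (1 - ζ₂) * x₂ ^ (1 - ζ₂) / DD α₀ ζ₁ ζ₂ β) * x₁ ^ ζ₂ := by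
  have hax : (0:ℝ) ≤ α₀ * x₂ := by positivity
  have h1 : α₀ ^ ζ₁ ≠ 0 := (Real.rpow_pos_of_pos hα₀ _).ne'
  have h2 : α₀ ^ ζ₂ ≠ 0 := (Real.rpow_pos_of_pos hα₀ _).ne'
  have h3 : x₂ ^ ζ₁ ≠ 0 := (Real.rpow_pos_of_pos hx₂ _).ne'
  have h4 : x₂ ^ ζ₂ ≠ 0 := (Real.rpow_pos_of_pos hx₂ _).ne'
  simp only [Gb, DD, Real.div_rpow hx₁.le hax, Real.mul_rpow hα₀.le hx₂.le,
    rsub1' hα₀, rsub1' hx₂]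
  generalize (ζ₁ * (β / α₀) ^ (ζ₁ - 1) - ζ₂ * (β / α₀) ^ (ζ₂ - 1)) = d
  rcases eq_or_ne d 0 with hd | hd
  · simp [hd]
  · field_simp

lemma Gb_pt₂ (α₀ ζ₁ ζ₂ β : ℝ) (hα₀ : 0 < α₀) {x₁ x₂ : ℝ} (hx₁ : 0 < x₁) (hx₂ : 0 < x₂) :
    Gb α₀ ζ₁ ζ₂ β x₁ x₂ =
      (x₁ ^ ζ₁ * α₀ ^ (1 - ζ₁) / DD α₀ ζ₁ ζ₂ β) * x₂ ^ (1 - ζ₁)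
    - (x₁ ^ ζ₂ * α₀ ^ (1 - ζ₂) / DD α₀ ζ₁ ζ₂ β) * x₂ ^ (1 - ζ₂) := by
  rw [Gb_pt α₀ ζ₁ ζ₂ β hα₀ hx₁ hx₂]
  ring

lemma ev_pos {x : ℝ} (hx : 0 < x) : ∀ᶠ t in 𝓝 x, (0:ℝ) < t := eventually_gt_nhds hx

lemma hasDerivAt_comb (A B c₁ c₂ : ℝ) {x : ℝ} (hx : x ≠ 0) :
    HasDerivAt (fun t : ℝ => A * t ^ c₁ - B * t ^ c₂)
      (A * (c₁ * x ^ (c₁ - 1)) - B * (c₂ * x ^ (c₂ - 1))) x :=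
  ((Real.hasDerivAt_rpow_const (Or.inl hx)).const_mul A).sub
    ((Real.hasDerivAt_rpow_const (Or.inl hx)).const_mul B)

lemma deriv_comb (A B c₁ c₂ : ℝ) {x : ℝ} (hx : x ≠ 0) :
    deriv (fun t : ℝ => A * t ^ c₁ - B * t ^ c₂) x
      = A * c₁ * x ^ (c₁ - 1) - B * c₂ * x ^ (c₂ - 1) := by
  rw [(hasDerivAt_comb A B c₁ c₂ hx).deriv]; ring

lemma deriv2_comb (A B c₁ c₂ : ℝ) {x : ℝ} (hx : 0 < x) :
    deriv (deriv (fun t : ℝ => A * t ^ c₁ - B * t ^ c₂)) x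
      = A * c₁ * (c₁ - 1) * x ^ (c₁ - 2) - B * c₂ * (c₂ - 1) * x ^ (c₂ - 2) := by
  have hev : deriv (fun t : ℝ => A * t ^ c₁ - B * t ^ c₂) =ᶠ[𝓝 x]
      (fun t => A * c₁ * t ^ (c₁ - 1) - B * c₂ * t ^ (c₂ - 1)) := by
    filter_upwards [ev_pos hx] with t ht
    exact deriv_comb A B c₁ c₂ ht.ne'
  rw [hev.deriv_eq, (hasDerivAt_comb (A * c₁) (B * c₂) (c₁ - 1) (c₂ - 1) hx.ne').deriv,
    show c₁ - 1 - 1 = c₁ - 2 by ring, show c₂ - 1 - 1 = c₂ - 2 by ring]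
  ring

lemma evGbL (α₀ ζ₁ ζ₂ β : ℝ) (hα₀ : 0 < α₀) {x₁ x₂ : ℝ} (hx₁ : 0 < x₁) (hx₂ : 0 < x₂) :
    (fun t => Gb α₀ ζ₁ ζ₂ β t x₂) =ᶠ[𝓝 x₁]
      (fun t => (α₀ ^ (1 - ζ₁) * x₂ ^ (1 - ζ₁) / DD α₀ ζ₁ ζ₂ β) * t ^ ζ₁
              - (α₀ ^ (1 - ζ₂) * x₂ ^ (1 - ζ₂) / DD α₀ ζ₁ ζ₂ β) * t ^ ζ₂) := by
  filter_upwards [ev_pos hx₁] with t ht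
  exact Gb_pt α₀ ζ₁ ζ₂ β hα₀ ht hx₂

lemma evGbR (α₀ ζ₁ ζ₂ β : ℝ) (hα₀ : 0 < α₀) {x₁ x₂ : ℝ} (hx₁ : 0 < x₁) (hx₂ : 0 < x₂) :
    (fun t => Gb α₀ ζ₁ ζ₂ β x₁ t) =ᶠ[𝓝 x₂]
      (fun t => (x₁ ^ ζ₁ * α₀ ^ (1 - ζ₁) / DD α₀ ζ₁ ζ₂ β) * t ^ (1 - ζ₁)
              - (x₁ ^ ζ₂ * α₀ ^ (1 - ζ₂) / DD α₀ ζ₁ ζ₂ β) * t ^ (1 - ζ₂)) := by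
  filter_upwards [ev_pos hx₂] with t ht
  exact Gb_pt₂ α₀ ζ₁ ζ₂ β hα₀ hx₁ ht

lemma L1 (α₀ ζ₁ ζ₂ β : ℝ) (hα₀ : 0 < α₀) {x₁ x₂ : ℝ} (hx₁ : 0 < x₁) (hx₂ : 0 < x₂) :
    deriv (fun t => Gb α₀ ζ₁ ζ₂ β t x₂) x₁
      = (α₀ ^ (1 - ζ₁) * x₂ ^ (1 - ζ₁) / DD α₀ ζ₁ ζ₂ β) * ζ₁ * x₁ ^ (ζ₁ - 1)
      - (α₀ ^ (1 - ζ₂) * x₂ ^ (1 - ζ₂) / DD α₀ ζ₁ ζ₂ β) * ζ₂ * x₁ ^ (ζ₂ - 1) := by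
  rw [(evGbL α₀ ζ₁ ζ₂ β hα₀ hx₁ hx₂).deriv_eq, deriv_comb _ _ _ _ hx₁.ne']

lemma L2 (α₀ ζ₁ ζ₂ β : ℝ) (hα₀ : 0 < α₀) {x₁ x₂ : ℝ} (hx₁ : 0 < x₁) (hx₂ : 0 < x₂) :
    deriv (deriv (fun t => Gb α₀ ζ₁ ζ₂ β t x₂)) x₁
      = (α₀ ^ (1 - ζ₁) * x₂ ^ (1 - ζ₁) / DD α₀ ζ₁ ζ₂ β) * ζ₁ * (ζ₁ - 1) * x₁ ^ (ζ₁ - 2)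
      - (α₀ ^ (1 - ζ₂) * x₂ ^ (1 - ζ₂) / DD α₀ ζ₁ ζ₂ β) * ζ₂ * (ζ₂ - 1) * x₁ ^ (ζ₂ - 2) := by
  rw [((evGbL α₀ ζ₁ ζ₂ β hα₀ hx₁ hx₂).deriv).deriv_eq, deriv2_comb _ _ _ _ hx₁]

lemma L3 (α₀ ζ₁ ζ₂ β : ℝ) (hα₀ : 0 < α₀) {x₁ x₂ : ℝ} (hx₁ : 0 < x₁) (hx₂ : 0 < x₂) :
    deriv (fun t => Gb α₀ ζ₁ ζ₂ β x₁ t) x₂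
      = (x₁ ^ ζ₁ * α₀ ^ (1 - ζ₁) / DD α₀ ζ₁ ζ₂ β) * (1 - ζ₁) * x₂ ^ (-ζ₁)
      - (x₁ ^ ζ₂ * α₀ ^ (1 - ζ₂) / DD α₀ ζ₁ ζ₂ β) * (1 - ζ₂) * x₂ ^ (-ζ₂) := by
  rw [(evGbR α₀ ζ₁ ζ₂ β hα₀ hx₁ hx₂).deriv_eq, deriv_comb _ _ _ _ hx₂.ne',
    show 1 - ζ₁ - 1 = -ζ₁ by ring, show 1 - ζ₂ - 1 = -ζ₂ by ring]

lemma L4 (α₀ ζ₁ ζ₂ β : ℝ) (hα₀ : 0 < α₀) {x₁ x₂ : ℝ} (hx₁ : 0 < x₁) (hx₂ : 0 < x₂) :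
    deriv (deriv (fun t => Gb α₀ ζ₁ ζ₂ β x₁ t)) x₂
      = (x₁ ^ ζ₁ * α₀ ^ (1 - ζ₁) / DD α₀ ζ₁ ζ₂ β) * (1 - ζ₁) * (-ζ₁) * x₂ ^ (-ζ₁ - 1)
      - (x₁ ^ ζ₂ * α₀ ^ (1 - ζ₂) / DD α₀ ζ₁ ζ₂ β) * (1 - ζ₂) * (-ζ₂) * x₂ ^ (-ζ₂ - 1) := by
  rw [((evGbR α₀ ζ₁ ζ₂ β hα₀ hx₁ hx₂).deriv).deriv_eq, deriv2_comb _ _ _ _ hx₂,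
    show 1 - ζ₁ - 2 = -ζ₁ - 1 by ring, show 1 - ζ₂ - 2 = -ζ₂ - 1 by ring]
  ring

lemma L5 (α₀ ζ₁ ζ₂ β : ℝ) (hα₀ : 0 < α₀) {x₁ x₂ : ℝ} (hx₁ : 0 < x₁) (hx₂ : 0 < x₂) :
    deriv (fun u => deriv (fun t => Gb α₀ ζ₁ ζ₂ β t u) x₁) x₂
      = (ζ₁ * x₁ ^ (ζ₁ - 1) * α₀ ^ (1 - ζ₁) / DD α₀ ζ₁ ζ₂ β) * (1 - ζ₁) * x₂ ^ (-ζ₁)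
      - (ζ₂ * x₁ ^ (ζ₂ - 1) * α₀ ^ (1 - ζ₂) / DD α₀ ζ₁ ζ₂ β) * (1 - ζ₂) * x₂ ^ (-ζ₂) := by
  have hev : (fun u => deriv (fun t => Gb α₀ ζ₁ ζ₂ β t u) x₁) =ᶠ[𝓝 x₂]
      (fun u => (ζ₁ * x₁ ^ (ζ₁ - 1) * α₀ ^ (1 - ζ₁) / DD α₀ ζ₁ ζ₂ β) * u ^ (1 - ζ₁)
              - (ζ₂ * x₁ ^ (ζ₂ - 1) * α₀ ^ (1 - ζ₂) / DD α₀ ζ₁ ζ₂ β) * u ^ (1 - ζ₂)) := by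
    filter_upwards [ev_pos hx₂] with u hu
    rw [L1 α₀ ζ₁ ζ₂ β hα₀ hx₁ hu]
    ring
  rw [hev.deriv_eq, deriv_comb _ _ _ _ hx₂.ne',
    show 1 - ζ₁ - 1 = -ζ₁ by ring, show 1 - ζ₂ - 1 = -ζ₂ by ring]

lemma rsub2 {x : ℝ} (hx : 0 < x) (ζ : ℝ) : x ^ (ζ - 2) = x ^ ζ / (x * x) := by
  rw [Real.rpow_sub hx, show (2:ℝ) = ((2:ℕ):ℝ) by norm_num, Real.rpow_natCast, pow_two]

lemma rneg {x : ℝ} (hx : 0 < x) (ζ : ℝ) : x ^ (-ζ) = 1 / x ^ ζ := by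
  rw [Real.rpow_neg hx.le, one_div]

lemma rneg1 {x : ℝ} (hx : 0 < x) (ζ : ℝ) : x ^ (-ζ - 1) = 1 / (x ^ ζ * x) := by
  rw [show -ζ - 1 = -(ζ + 1) by ring, Real.rpow_neg hx.le, Real.rpow_add hx, Real.rpow_one,
    one_div]


set_option maxHeartbeats 2000000 in
/-- `G(·,·;β)` solves the generator equation, vanishes at the ruin
level, and has unit marginal value at the barrier. -/
theorem stmt_3 (μA μL δ σA σL ρ ζ₁ ζ₂ α₀ β : ℝ)
    (hσA : 0 < σA) (hσL : 0 < σL) (hρ₁ : -1 < ρ) (hρ₂ : ρ < 1)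
    (hμ : μL < μA) (hδ : μA < δ)
    (hroot₁ : (1 / 2) * (σA ^ 2 + σL ^ 2 - 2 * ρ * σA * σL) * ζ₁ * (ζ₁ - 1)
      + (μA - μL) * ζ₁ + (μL - δ) = 0)
    (hroot₂ : (1 / 2) * (σA ^ 2 + σL ^ 2 - 2 * ρ * σA * σL) * ζ₂ * (ζ₂ - 1)
      + (μA - μL) * ζ₂ + (μL - δ) = 0)
    (hζlt : ζ₁ < ζ₂) (hζ₁ : ζ₁ < 0) (hζ₂ : 1 < ζ₂)
    (hα₀ : 0 < α₀) (hβ : α₀ < β) :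
    (∀ x₁ x₂ : ℝ, 0 < x₁ → 0 < x₂ →
      gen μA μL σA σL ρ (fun a b => Gb α₀ ζ₁ ζ₂ β a b) x₁ x₂
        - δ * Gb α₀ ζ₁ ζ₂ β x₁ x₂ = 0) ∧
    (∀ x₂ : ℝ, 0 < x₂ → Gb α₀ ζ₁ ζ₂ β (α₀ * x₂) x₂ = 0) ∧
    (∀ x₂ : ℝ, 0 < x₂ → deriv (fun t => Gb α₀ ζ₁ ζ₂ β t x₂) (β * x₂) = 1) := by
  have hβpos : 0 < β := hα₀.trans hβ
  have hba : 0 < β / α₀ := div_pos hβpos hα₀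
  have hDneg : DD α₀ ζ₁ ζ₂ β < 0 := by
    have h1 : ζ₁ * (β / α₀) ^ (ζ₁ - 1) < 0 :=
      mul_neg_of_neg_of_pos hζ₁ (Real.rpow_pos_of_pos hba _)
    have h2 : 0 < ζ₂ * (β / α₀) ^ (ζ₂ - 1) :=
      mul_pos (by linarith) (Real.rpow_pos_of_pos hba _)
    have : DD α₀ ζ₁ ζ₂ β = ζ₁ * (β / α₀) ^ (ζ₁ - 1) - ζ₂ * (β / α₀) ^ (ζ₂ - 1) := rfl
    linarith [this]
  have hD : DD α₀ ζ₁ ζ₂ β ≠ 0 := hDneg.ne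
  refine ⟨?_, ?_, ?_⟩
  · intro x₁ x₂ hx₁ hx₂
    have ha1 : α₀ ^ ζ₁ ≠ 0 := (Real.rpow_pos_of_pos hα₀ _).ne'
    have ha2 : α₀ ^ ζ₂ ≠ 0 := (Real.rpow_pos_of_pos hα₀ _).ne'
    have hq1 : x₂ ^ ζ₁ ≠ 0 := (Real.rpow_pos_of_pos hx₂ _).ne'
    have hq2 : x₂ ^ ζ₂ ≠ 0 := (Real.rpow_pos_of_pos hx₂ _).ne'
    have hp1 : x₁ ^ ζ₁ ≠ 0 := (Real.rpow_pos_of_pos hx₁ _).ne'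
    have hp2 : x₁ ^ ζ₂ ≠ 0 := (Real.rpow_pos_of_pos hx₁ _).ne'
    simp only [gen]
    rw [L1 α₀ ζ₁ ζ₂ β hα₀ hx₁ hx₂, L2 α₀ ζ₁ ζ₂ β hα₀ hx₁ hx₂, L3 α₀ ζ₁ ζ₂ β hα₀ hx₁ hx₂,
      L4 α₀ ζ₁ ζ₂ β hα₀ hx₁ hx₂, L5 α₀ ζ₁ ζ₂ β hα₀ hx₁ hx₂, Gb_pt α₀ ζ₁ ζ₂ β hα₀ hx₁ hx₂]
    simp only [rsub1 hx₁, rsub1' hx₂, rsub1' hα₀, rsub2 hx₁, rneg hx₂, rneg1 hx₂]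
    have hE₁ : μA * ζ₁ + μL * (1 - ζ₁) + 1/2 * σA^2 * ζ₁ * (ζ₁ - 1)
        + 1/2 * σL^2 * (1 - ζ₁) * (-ζ₁) + ρ * σA * σL * ζ₁ * (1 - ζ₁) - δ = 0 := by
      linear_combination hroot₁
    have hE₂ : μA * ζ₂ + μL * (1 - ζ₂) + 1/2 * σA^2 * ζ₂ * (ζ₂ - 1)
        + 1/2 * σL^2 * (1 - ζ₂) * (-ζ₂) + ρ * σA * σL * ζ₂ * (1 - ζ₂) - δ = 0 := by
      linear_combination hroot₂
    trans (((x₁ ^ ζ₁ * α₀ * x₂ / (α₀ ^ ζ₁ * x₂ ^ ζ₁)) *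
        (μA * ζ₁ + μL * (1 - ζ₁) + 1/2 * σA^2 * ζ₁ * (ζ₁ - 1)
          + 1/2 * σL^2 * (1 - ζ₁) * (-ζ₁) + ρ * σA * σL * ζ₁ * (1 - ζ₁) - δ)
      - (x₁ ^ ζ₂ * α₀ * x₂ / (α₀ ^ ζ₂ * x₂ ^ ζ₂)) *
        (μA * ζ₂ + μL * (1 - ζ₂) + 1/2 * σA^2 * ζ₂ * (ζ₂ - 1)
          + 1/2 * σL^2 * (1 - ζ₂) * (-ζ₂) + ρ * σA * σL * ζ₂ * (1 - ζ₂) - δ))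
        / DD α₀ ζ₁ ζ₂ β)
    · field_simp
      ring
    · rw [hE₁, hE₂]
      simp
  · intro x₂ hx₂
    have h : α₀ * x₂ / (α₀ * x₂) = 1 := div_self (by positivity)
    simp [Gb, h]
  · intro x₂ hx₂
    have hbx : 0 < β * x₂ := mul_pos hβpos hx₂
    have L1' : deriv (fun t => Gb α₀ ζ₁ ζ₂ β t x₂) (β * x₂)
        = (α₀ ^ (1 - ζ₁) * x₂ ^ (1 - ζ₁) * ζ₁ * (β * x₂) ^ (ζ₁ - 1)
          - α₀ ^ (1 - ζ₂) * x₂ ^ (1 - ζ₂) * ζ₂ * (β * x₂) ^ (ζ₂ - 1)) / DD α₀ ζ₁ ζ₂ β := by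
      rw [L1 α₀ ζ₁ ζ₂ β hα₀ hbx hx₂]
      ring
    rw [L1', div_eq_one_iff_eq hD]
    have ha1 : α₀ ^ ζ₁ ≠ 0 := (Real.rpow_pos_of_pos hα₀ _).ne'
    have ha2 : α₀ ^ ζ₂ ≠ 0 := (Real.rpow_pos_of_pos hα₀ _).ne'
    have hq1 : x₂ ^ ζ₁ ≠ 0 := (Real.rpow_pos_of_pos hx₂ _).ne'
    have hq2 : x₂ ^ ζ₂ ≠ 0 := (Real.rpow_pos_of_pos hx₂ _).ne'
    have hb1 : β ^ ζ₁ ≠ 0 := (Real.rpow_pos_of_pos hβpos _).ne'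
    have hb2 : β ^ ζ₂ ≠ 0 := (Real.rpow_pos_of_pos hβpos _).ne'
    show _ = ζ₁ * (β / α₀) ^ (ζ₁ - 1) - ζ₂ * (β / α₀) ^ (ζ₂ - 1)
    simp only [rsub1 hbx, rsub1 hba, rsub1' hα₀, rsub1' hx₂,
      Real.mul_rpow hβpos.le hx₂.le, Real.div_rpow hβpos.le hα₀.le]
    field_simp
end

section
/- The roots ζ₁, ζ₂ satisfy ζ₁(ζ₁−1)/(ζ₂(ζ₂−1)) = (δ − μ_L − (μ_A−μ_L)ζ₁)/(δ − μ_L − (μ_A−μ_L)ζ₂), and this common ratio is strictly greater than 1. -/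
/-- the ratio identity for the roots, and the ratio exceeds 1. -/
theorem stmt_4 (μA μL δ σA σL ρ ζ₁ ζ₂ : ℝ)
    (hσA : 0 < σA) (hσL : 0 < σL) (hρ₁ : -1 < ρ) (hρ₂ : ρ < 1)
    (hμ : μL < μA) (hδ : μA < δ)
    (hroot₁ : (1 / 2) * (σA ^ 2 + σL ^ 2 - 2 * ρ * σA * σL) * ζ₁ * (ζ₁ - 1)
      + (μA - μL) * ζ₁ + (μL - δ) = 0)
    (hroot₂ : (1 / 2) * (σA ^ 2 + σL ^ 2 - 2 * ρ * σA * σL) * ζ₂ * (ζ₂ - 1)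
      + (μA - μL) * ζ₂ + (μL - δ) = 0)
    (hζlt : ζ₁ < ζ₂) (hζ₁ : ζ₁ < 0) (hζ₂ : 1 < ζ₂) :
    ζ₁ * (ζ₁ - 1) / (ζ₂ * (ζ₂ - 1))
      = (δ - μL - (μA - μL) * ζ₁) / (δ - μL - (μA - μL) * ζ₂) ∧
    1 < ζ₁ * (ζ₁ - 1) / (ζ₂ * (ζ₂ - 1)) := by
  set s := σA ^ 2 + σL ^ 2 - 2 * ρ * σA * σL with hs
  have hspos : 0 < s := by nlinarith [sq_nonneg (σA - σL), mul_pos hσA hσL]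
  have h1 : s * (ζ₁ * (ζ₁ - 1)) = 2 * (δ - μL - (μA - μL) * ζ₁) := by
    linear_combination 2 * hroot₁
  have h2 : s * (ζ₂ * (ζ₂ - 1)) = 2 * (δ - μL - (μA - μL) * ζ₂) := by
    linear_combination 2 * hroot₂
  have hden : 0 < ζ₂ * (ζ₂ - 1) := mul_pos (by linarith) (by linarith)
  have hD₂ : 0 < δ - μL - (μA - μL) * ζ₂ := by nlinarith
  constructor
  · rw [div_eq_div_iff (ne_of_gt hden) (ne_of_gt hD₂)]
    have key : s * (ζ₁ * (ζ₁ - 1) * (δ - μL - (μA - μL) * ζ₂))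
        = s * ((δ - μL - (μA - μL) * ζ₁) * (ζ₂ * (ζ₂ - 1))) := by
      linear_combination (δ - μL - (μA - μL) * ζ₂) * h1
        - (δ - μL - (μA - μL) * ζ₁) * h2
    exact mul_left_cancel₀ (ne_of_gt hspos) key
  · rw [lt_div_iff₀ hden]
    nlinarith [mul_pos (sub_pos.mpr hμ) (sub_pos.mpr hζlt)]
end

section
/- The function h(β) := ζ₁(β/α₀)^{ζ₁−1} − ζ₂(β/α₀)^{ζ₂−1}, defined for β ∈ [α₀, ∞), attains a unique global maximum at the point β₀* := α₀ · (ζ₁(ζ₁−1)/(ζ₂(ζ₂−1)))^{1/(ζ₂−ζ₁)}, and moreover β₀* > α₀. -/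
open Real Set

/-! The derivative of `x ↦ ζ₁ x^(ζ₁-1) - ζ₂ x^(ζ₂-1)` factors as
`ζ₂(ζ₂-1) x^(ζ₁-2) (c^(ζ₂-ζ₁) - x^(ζ₂-ζ₁))`, where `c^(ζ₂-ζ₁) = ζ₁(ζ₁-1)/(ζ₂(ζ₂-1))`; so the
function increases strictly up to `c` and decreases strictly after it, making `c` its unique
maximiser on `(0, ∞)`. Subtracting the two root equations gives
`σ̃² (ζ₁(ζ₁-1) - ζ₂(ζ₂-1)) = 2 (μ_A - μ_L)(ζ₂ - ζ₁) > 0`, hence `c > 1`, i.e. `β₀* > α₀`. -/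

theorem sq_add_sq_sub_two_mul_mul_pos {a b ρ : ℝ} (ha : 0 < a) (hb : 0 < b) (hρ : ρ < 1) :
    0 < a ^ 2 + b ^ 2 - 2 * ρ * a * b := by
  nlinarith [sq_nonneg (a - b), mul_pos (mul_pos ha hb) (sub_pos.2 hρ)]

theorem mul_sub_one_lt_of_quadratic_roots {s m k z₁ z₂ : ℝ} (hs : 0 < s) (hm : 0 < m)
    (hz : z₁ < z₂) (h₁ : 1 / 2 * s * z₁ * (z₁ - 1) + m * z₁ + k = 0)
    (h₂ : 1 / 2 * s * z₂ * (z₂ - 1) + m * z₂ + k = 0) :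
    z₂ * (z₂ - 1) < z₁ * (z₁ - 1) := by
  have key : s * (z₁ * (z₁ - 1) - z₂ * (z₂ - 1)) = 2 * m * (z₂ - z₁) := by
    linear_combination 2 * h₁ - 2 * h₂
  have hpos : 0 < s * (z₁ * (z₁ - 1) - z₂ * (z₂ - 1)) := by
    rw [key]; exact mul_pos (by positivity) (sub_pos.2 hz)
  exact sub_pos.1 (pos_of_mul_pos_right hpos hs.le)

noncomputable def powDiff (z₁ z₂ x : ℝ) : ℝ := z₁ * x ^ (z₁ - 1) - z₂ * x ^ (z₂ - 1)

namespace powDiff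

variable {z₁ z₂ c : ℝ}

theorem continuousOn : ContinuousOn (powDiff z₁ z₂) (Ioi 0) := fun x hx =>
  ((continuousAt_const.mul (continuousAt_rpow_const x _ (Or.inl (ne_of_gt hx)))).sub
    (continuousAt_const.mul (continuousAt_rpow_const x _ (Or.inl (ne_of_gt hx))))).continuousWithinAt

theorem hasDerivAt {x : ℝ} (hx : 0 < x) :
    HasDerivAt (powDiff z₁ z₂)
      (z₁ * (z₁ - 1) * x ^ (z₁ - 1 - 1) - z₂ * (z₂ - 1) * x ^ (z₂ - 1 - 1)) x := by
  have h₁ := (hasDerivAt_rpow_const (p := z₁ - 1) (Or.inl hx.ne')).const_mul z₁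
  have h₂ := (hasDerivAt_rpow_const (p := z₂ - 1) (Or.inl hx.ne')).const_mul z₂
  exact (h₁.sub h₂).congr_deriv (by ring)

theorem deriv_eq_of_critical {x : ℝ} (hx : 0 < x)
    (hc : z₂ * (z₂ - 1) * c ^ (z₂ - z₁) = z₁ * (z₁ - 1)) :
    z₁ * (z₁ - 1) * x ^ (z₁ - 1 - 1) - z₂ * (z₂ - 1) * x ^ (z₂ - 1 - 1)
      = z₂ * (z₂ - 1) * x ^ (z₁ - 1 - 1) * (c ^ (z₂ - z₁) - x ^ (z₂ - z₁)) := by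
  have hsplit : x ^ (z₂ - 1 - 1) = x ^ (z₁ - 1 - 1) * x ^ (z₂ - z₁) := by
    rw [← rpow_add hx]; ring_nf
  rw [← hc, hsplit]; ring

variable (hB : 0 < z₂ * (z₂ - 1)) (hz : z₁ < z₂)
  (hc : z₂ * (z₂ - 1) * c ^ (z₂ - z₁) = z₁ * (z₁ - 1))
include hB hz hc

theorem strictMonoOn_Ioc : StrictMonoOn (powDiff z₁ z₂) (Ioc 0 c) := by
  refine strictMonoOn_of_deriv_pos (convex_Ioc 0 c) (continuousOn.mono Ioc_subset_Ioi_self)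
    fun x hx => ?_
  rw [interior_Ioc] at hx
  rw [(hasDerivAt hx.1).deriv, deriv_eq_of_critical hx.1 hc]
  have hlt : x ^ (z₂ - z₁) < c ^ (z₂ - z₁) := rpow_lt_rpow hx.1.le hx.2 (sub_pos.2 hz)
  exact mul_pos (mul_pos hB (rpow_pos_of_pos hx.1 _)) (sub_pos.2 hlt)

theorem strictAntiOn_Ici (hc₀ : 0 < c) : StrictAntiOn (powDiff z₁ z₂) (Ici c) := by
  refine strictAntiOn_of_deriv_neg (convex_Ici c)
    (continuousOn.mono fun x hx => lt_of_lt_of_le hc₀ hx) fun x hx => ?_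
  rw [interior_Ici] at hx
  have hx₀ : 0 < x := hc₀.trans hx
  rw [(hasDerivAt hx₀).deriv, deriv_eq_of_critical hx₀ hc]
  have hlt : c ^ (z₂ - z₁) < x ^ (z₂ - z₁) := rpow_lt_rpow hc₀.le hx (sub_pos.2 hz)
  exact mul_neg_of_pos_of_neg (mul_pos hB (rpow_pos_of_pos hx₀ _)) (sub_neg.2 hlt)

theorem lt_of_ne_critical (hc₀ : 0 < c) {x : ℝ} (hx : 0 < x) (hxc : x ≠ c) :
    powDiff z₁ z₂ x < powDiff z₁ z₂ c := by
  rcases hxc.lt_or_gt with h | h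
  · exact strictMonoOn_Ioc hB hz hc ⟨hx, h.le⟩ ⟨hc₀, le_rfl⟩ h
  · exact strictAntiOn_Ici hB hz hc hc₀ self_mem_Ici h.le h

end powDiff

theorem stmt_5_general (μA μL δ σA σL ρ ζ₁ ζ₂ α₀ β₀ : ℝ)
    (hσA : 0 < σA) (hσL : 0 < σL) (hρ₂ : ρ < 1)
    (hμ : μL < μA)
    (hroot₁ : (1 / 2) * (σA ^ 2 + σL ^ 2 - 2 * ρ * σA * σL) * ζ₁ * (ζ₁ - 1)
      + (μA - μL) * ζ₁ + (μL - δ) = 0)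
    (hroot₂ : (1 / 2) * (σA ^ 2 + σL ^ 2 - 2 * ρ * σA * σL) * ζ₂ * (ζ₂ - 1)
      + (μA - μL) * ζ₂ + (μL - δ) = 0)
    (hζlt : ζ₁ < ζ₂) (hζ₂ : 1 < ζ₂)
    (hα₀ : 0 < α₀)
    (hβ₀ : β₀ = α₀ * (ζ₁ * (ζ₁ - 1) / (ζ₂ * (ζ₂ - 1))) ^ (1 / (ζ₂ - ζ₁))) :
    α₀ < β₀ ∧
    ∀ β : ℝ, α₀ ≤ β → β ≠ β₀ →
      ζ₁ * (β / α₀) ^ (ζ₁ - 1) - ζ₂ * (β / α₀) ^ (ζ₂ - 1)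
        < ζ₁ * (β₀ / α₀) ^ (ζ₁ - 1) - ζ₂ * (β₀ / α₀) ^ (ζ₂ - 1) := by
  have hBA := mul_sub_one_lt_of_quadratic_roots
    (sq_add_sq_sub_two_mul_mul_pos hσA hσL hρ₂) (sub_pos.2 hμ) hζlt hroot₁ hroot₂
  have hB : 0 < ζ₂ * (ζ₂ - 1) := mul_pos (by linarith) (by linarith)
  have hd : 0 < ζ₂ - ζ₁ := sub_pos.2 hζlt
  set c := (ζ₁ * (ζ₁ - 1) / (ζ₂ * (ζ₂ - 1))) ^ (1 / (ζ₂ - ζ₁))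
  have hc₁ : 1 < c := one_lt_rpow ((one_lt_div hB).2 hBA) (by positivity)
  have hc : ζ₂ * (ζ₂ - 1) * c ^ (ζ₂ - ζ₁) = ζ₁ * (ζ₁ - 1) := by
    rw [← rpow_mul (div_pos (hB.trans hBA) hB).le, one_div_mul_cancel hd.ne', rpow_one,
      mul_div_cancel₀ _ hB.ne']
  have hβ₀c : β₀ / α₀ = c := by rw [hβ₀]; field_simp
  refine ⟨hβ₀ ▸ lt_mul_of_one_lt_right hα₀ hc₁, fun β hβ hne => ?_⟩
  rw [hβ₀c]
  refine powDiff.lt_of_ne_critical hB hζlt hc (zero_lt_one.trans hc₁)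
    (div_pos (hα₀.trans_le hβ) hα₀) fun h => hne ?_
  rw [hβ₀, ← h]; field_simp

/-- the denominator function `h(β) = ζ₁(β/α₀)^{ζ₁−1} − ζ₂(β/α₀)^{ζ₂−1}`
attains a unique global maximum on `[α₀, ∞)` at `β₀* > α₀`. -/
theorem stmt_5 (μA μL δ σA σL ρ ζ₁ ζ₂ α₀ β₀ : ℝ)
    (hσA : 0 < σA) (hσL : 0 < σL) (hρ₁ : -1 < ρ) (hρ₂ : ρ < 1)
    (hμ : μL < μA) (hδ : μA < δ)
    (hroot₁ : (1 / 2) * (σA ^ 2 + σL ^ 2 - 2 * ρ * σA * σL) * ζ₁ * (ζ₁ - 1)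
      + (μA - μL) * ζ₁ + (μL - δ) = 0)
    (hroot₂ : (1 / 2) * (σA ^ 2 + σL ^ 2 - 2 * ρ * σA * σL) * ζ₂ * (ζ₂ - 1)
      + (μA - μL) * ζ₂ + (μL - δ) = 0)
    (hζlt : ζ₁ < ζ₂) (hζ₁ : ζ₁ < 0) (hζ₂ : 1 < ζ₂)
    (hα₀ : 0 < α₀)
    (hβ₀ : β₀ = α₀ * (ζ₁ * (ζ₁ - 1) / (ζ₂ * (ζ₂ - 1))) ^ (1 / (ζ₂ - ζ₁))) :
    α₀ < β₀ ∧
    ∀ β : ℝ, α₀ ≤ β → β ≠ β₀ →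
      ζ₁ * (β / α₀) ^ (ζ₁ - 1) - ζ₂ * (β / α₀) ^ (ζ₂ - 1)
        < ζ₁ * (β₀ / α₀) ^ (ζ₁ - 1) - ζ₂ * (β₀ / α₀) ^ (ζ₂ - 1) :=
  stmt_5_general μA μL δ σA σL ρ ζ₁ ζ₂ α₀ β₀ hσA hσL hρ₂ hμ hroot₁ hroot₂ hζlt hζ₂ hα₀ hβ₀
end

section
/- The barrier level β₀* satisfies the smooth-fit identities (β₀*/α₀)^{ζ₂−ζ₁} = ζ₁(ζ₁−1)/(ζ₂(ζ₂−1)), equivalently ζ₁(ζ₁−1)(β₀*/α₀)^{ζ₁} = ζ₂(ζ₂−1)(β₀*/α₀)^{ζ₂}, and consequently ∂²G/∂x₁² (β₀*x₂, x₂; β₀*) = 0 for all x₂ > 0. -/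
/-!
`G(·, x₂; β)` is a combination of the powers `u ^ ζ₁` and `u ^ ζ₂` of `u = x₁ / (α₀ x₂)`, so its
second derivative at the barrier `x₁ = β x₂` is a multiple of
`ζ₁ (ζ₁ - 1) b ^ (ζ₁ - 2) - ζ₂ (ζ₂ - 1) b ^ (ζ₂ - 2)` with `b = β / α₀`. The choice of `β₀*`
makes `b ^ (ζ₂ - ζ₁)` equal to `ζ₁ (ζ₁ - 1) / (ζ₂ (ζ₂ - 1))`, which is exactly the vanishing of
this expression.
-/

namespace Real

theorem mul_rpow_eq_mul_rpow_of_rpow_sub_eq {b c₁ c₂ p q : ℝ} (hb : 0 < b) (hc₂ : c₂ ≠ 0)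
    (h : b ^ (q - p) = c₁ / c₂) : c₁ * b ^ p = c₂ * b ^ q := by
  rw [show b ^ q = b ^ p * b ^ (q - p) by rw [← rpow_add hb, add_sub_cancel], h]
  field_simp

theorem mul_rpow_sub_eq_mul_rpow_sub {b c₁ c₂ p q : ℝ} (hb : 0 < b)
    (h : c₁ * b ^ p = c₂ * b ^ q) (r : ℝ) : c₁ * b ^ (p - r) = c₂ * b ^ (q - r) := by
  rw [rpow_sub hb, rpow_sub hb]
  linear_combination h / b ^ r

theorem hasDerivAt_div_rpow_const {a t : ℝ} (p : ℝ) (ha : 0 < a) (ht : 0 < t) :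
    HasDerivAt (fun s => (s / a) ^ p) (p * (t / a) ^ (p - 1) / a) t := by
  convert ((hasDerivAt_id' t).div_const a).rpow_const (p := p) (Or.inl (div_pos ht ha).ne') using 1
  ring

end Real

section ValueFunction

variable {α₀ ζ₁ ζ₂ β x₂ : ℝ}

theorem hasDerivAt_Gb (hα₀ : 0 < α₀) (hx₂ : 0 < x₂) {x₁ : ℝ} (hx₁ : 0 < x₁) :
    HasDerivAt (fun s => Gb α₀ ζ₁ ζ₂ β s x₂)
      ((ζ₁ * (x₁ / (α₀ * x₂)) ^ (ζ₁ - 1) - ζ₂ * (x₁ / (α₀ * x₂)) ^ (ζ₂ - 1)) /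
        (ζ₁ * (β / α₀) ^ (ζ₁ - 1) - ζ₂ * (β / α₀) ^ (ζ₂ - 1))) x₁ := by
  have ha : 0 < α₀ * x₂ := mul_pos hα₀ hx₂
  refine ((((Real.hasDerivAt_div_rpow_const ζ₁ ha hx₁).sub
    (Real.hasDerivAt_div_rpow_const ζ₂ ha hx₁)).const_mul (α₀ * x₂)).div_const
      (ζ₁ * (β / α₀) ^ (ζ₁ - 1) - ζ₂ * (β / α₀) ^ (ζ₂ - 1))).congr_deriv ?_
  rw [mul_sub, mul_div_cancel₀ _ ha.ne', mul_div_cancel₀ _ ha.ne']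

theorem deriv_deriv_Gb (hα₀ : 0 < α₀) (hx₂ : 0 < x₂) {x₁ : ℝ} (hx₁ : 0 < x₁) :
    deriv (deriv fun s => Gb α₀ ζ₁ ζ₂ β s x₂) x₁ =
      (ζ₁ * (ζ₁ - 1) * (x₁ / (α₀ * x₂)) ^ (ζ₁ - 2) -
          ζ₂ * (ζ₂ - 1) * (x₁ / (α₀ * x₂)) ^ (ζ₂ - 2)) / (α₀ * x₂) /
        (ζ₁ * (β / α₀) ^ (ζ₁ - 1) - ζ₂ * (β / α₀) ^ (ζ₂ - 1)) := by
  have ha : 0 < α₀ * x₂ := mul_pos hα₀ hx₂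
  have hderiv : deriv (fun s => Gb α₀ ζ₁ ζ₂ β s x₂) =ᶠ[nhds x₁] fun s =>
      (ζ₁ * (s / (α₀ * x₂)) ^ (ζ₁ - 1) - ζ₂ * (s / (α₀ * x₂)) ^ (ζ₂ - 1)) /
        (ζ₁ * (β / α₀) ^ (ζ₁ - 1) - ζ₂ * (β / α₀) ^ (ζ₂ - 1)) :=
    Filter.eventuallyEq_of_mem (Ioi_mem_nhds hx₁) fun s hs => (hasDerivAt_Gb hα₀ hx₂ hs).deriv
  rw [hderiv.deriv_eq]
  refine (((((Real.hasDerivAt_div_rpow_const (ζ₁ - 1) ha hx₁).const_mul ζ₁).sub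
    ((Real.hasDerivAt_div_rpow_const (ζ₂ - 1) ha hx₁).const_mul ζ₂)).div_const _).congr_deriv
      ?_).deriv
  ring_nf

end ValueFunction

theorem stmt_6_general (ζ₁ ζ₂ α₀ β₀ : ℝ)
    (hζ₁ : ζ₁ < 0) (hζ₂ : 1 < ζ₂)
    (hα₀ : 0 < α₀)
    (hβ₀ : β₀ = α₀ * (ζ₁ * (ζ₁ - 1) / (ζ₂ * (ζ₂ - 1))) ^ (1 / (ζ₂ - ζ₁))) :
    (β₀ / α₀) ^ (ζ₂ - ζ₁) = ζ₁ * (ζ₁ - 1) / (ζ₂ * (ζ₂ - 1)) ∧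
    ζ₁ * (ζ₁ - 1) * (β₀ / α₀) ^ ζ₁ = ζ₂ * (ζ₂ - 1) * (β₀ / α₀) ^ ζ₂ ∧
    ∀ x₂ : ℝ, 0 < x₂ →
      deriv (deriv (fun t => Gb α₀ ζ₁ ζ₂ β₀ t x₂)) (β₀ * x₂) = 0 := by
  have hc₂ : 0 < ζ₂ * (ζ₂ - 1) := by nlinarith
  have hratio : 0 < ζ₁ * (ζ₁ - 1) / (ζ₂ * (ζ₂ - 1)) := div_pos (by nlinarith) hc₂
  have hb : β₀ / α₀ = (ζ₁ * (ζ₁ - 1) / (ζ₂ * (ζ₂ - 1))) ^ (ζ₂ - ζ₁)⁻¹ := by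
    rw [hβ₀, mul_div_cancel_left₀ _ hα₀.ne', one_div]
  have hb_pos : 0 < β₀ / α₀ := hb ▸ Real.rpow_pos_of_pos hratio _
  have hpow : (β₀ / α₀) ^ (ζ₂ - ζ₁) = ζ₁ * (ζ₁ - 1) / (ζ₂ * (ζ₂ - 1)) := by
    rw [hb, Real.rpow_inv_rpow hratio.le (by linarith)]
  have hfit := Real.mul_rpow_eq_mul_rpow_of_rpow_sub_eq hb_pos hc₂.ne' hpow
  refine ⟨hpow, hfit, fun x₂ hx₂ => ?_⟩
  have hβ₀_pos : 0 < β₀ := (div_pos_iff_of_pos_right hα₀).mp hb_pos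
  rw [deriv_deriv_Gb hα₀ hx₂ (mul_pos hβ₀_pos hx₂), mul_div_mul_right _ _ hx₂.ne',
    Real.mul_rpow_sub_eq_mul_rpow_sub hb_pos hfit 2, sub_self, zero_div, zero_div]

/-- the smooth-fit identities at the optimal barrier `β₀*`, and the
vanishing of the second derivative of `G(·,·;β₀*)` at the barrier. -/
theorem stmt_6 (μA μL δ σA σL ρ ζ₁ ζ₂ α₀ β₀ : ℝ)
    (hσA : 0 < σA) (hσL : 0 < σL) (hρ₁ : -1 < ρ) (hρ₂ : ρ < 1)
    (hμ : μL < μA) (hδ : μA < δ)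
    (hroot₁ : (1 / 2) * (σA ^ 2 + σL ^ 2 - 2 * ρ * σA * σL) * ζ₁ * (ζ₁ - 1)
      + (μA - μL) * ζ₁ + (μL - δ) = 0)
    (hroot₂ : (1 / 2) * (σA ^ 2 + σL ^ 2 - 2 * ρ * σA * σL) * ζ₂ * (ζ₂ - 1)
      + (μA - μL) * ζ₂ + (μL - δ) = 0)
    (hζlt : ζ₁ < ζ₂) (hζ₁ : ζ₁ < 0) (hζ₂ : 1 < ζ₂)
    (hα₀ : 0 < α₀)
    (hβ₀ : β₀ = α₀ * (ζ₁ * (ζ₁ - 1) / (ζ₂ * (ζ₂ - 1))) ^ (1 / (ζ₂ - ζ₁))) :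
    (β₀ / α₀) ^ (ζ₂ - ζ₁) = ζ₁ * (ζ₁ - 1) / (ζ₂ * (ζ₂ - 1)) ∧
    ζ₁ * (ζ₁ - 1) * (β₀ / α₀) ^ ζ₁ = ζ₂ * (ζ₂ - 1) * (β₀ / α₀) ^ ζ₂ ∧
    ∀ x₂ : ℝ, 0 < x₂ →
      deriv (deriv (fun t => Gb α₀ ζ₁ ζ₂ β₀ t x₂)) (β₀ * x₂) = 0 :=
  stmt_6_general ζ₁ ζ₂ α₀ β₀ hζ₁ hζ₂ hα₀ hβ₀
end

section
/- The value of the barrier-strategy value function at the optimal barrier is G(β₀* x₂, x₂; β₀*) = β₀* x₂ · (μ_A − μ_L)/(δ − μ_L) for every x₂ > 0. -/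
/-! At the barrier `x₁ = β₀* x₂` the ratio `r = β₀*/α₀` satisfies `r^(ζ₂-ζ₁) = c` with
`c = ζ₁(ζ₁-1)/(ζ₂(ζ₂-1))`, so factoring `r^(ζ₁-1)` out of `G` leaves `β₀* x₂ (1-c)/(ζ₁-ζ₂c)`.
Vieta's relations for the two roots of the characteristic quadratic turn `(1-c)/(ζ₁-ζ₂c)`
into `(μ_A-μ_L)/(δ-μ_L)`. -/

open Real

/-- Vieta's two relations with the leading coefficient `a` eliminated. -/
lemma quadratic_roots_add_sub_one_mul_add_mul_mul {a b k x y : ℝ} (hxy : x ≠ y)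
    (hx : a * x * (x - 1) + b * x + k = 0) (hy : a * y * (y - 1) + b * y + k = 0) :
    (x + y - 1) * k + x * y * b = 0 := by
  have hsub : x - y ≠ 0 := sub_ne_zero.2 hxy
  have hsum : a * (x + y - 1) + b = 0 :=
    (mul_eq_zero.1 (by linear_combination hx - hy : (x - y) * (a * (x + y - 1) + b) = 0)).resolve_left
      hsub
  have hprod : a * (x * y) - k = 0 :=
    (mul_eq_zero.1 (by linear_combination y * hx - x * hy : (x - y) * (a * (x * y) - k) = 0)).resolve_left
      hsub
  linear_combination (x * y) * hsum - (x + y - 1) * hprod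

lemma quadratic_roots_one_sub_ratio {a b k x y : ℝ} (hxy : x ≠ y) (hy₀ : y * (y - 1) ≠ 0)
    (hx : a * x * (x - 1) + b * x + k = 0) (hy : a * y * (y - 1) + b * y + k = 0) :
    (1 - x * (x - 1) / (y * (y - 1))) * k + (x - y * (x * (x - 1) / (y * (y - 1)))) * b = 0 := by
  have hvieta := quadratic_roots_add_sub_one_mul_add_mul_mul hxy hx hy
  obtain ⟨hy0, hy1⟩ := mul_ne_zero_iff.1 hy₀
  field_simp
  linear_combination (y - x) * hvieta

lemma rpow_sub_rpow_div_eq {r : ℝ} (hr : 0 < r) (p q : ℝ) :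
    (r ^ p - r ^ q) / (p * r ^ (p - 1) - q * r ^ (q - 1)) =
      r * (1 - r ^ (q - p)) / (p - q * r ^ (q - p)) := by
  have e₁ : r ^ p = r ^ (p - 1) * r := by rw [← rpow_add_one hr.ne', sub_add_cancel]
  have e₂ : r ^ q = r ^ (p - 1) * r * r ^ (q - p) := by
    rw [← rpow_add_one hr.ne', ← rpow_add hr]; congr 1; ring
  have e₃ : r ^ (q - 1) = r ^ (p - 1) * r ^ (q - p) := by rw [← rpow_add hr]; congr 1; ring
  rw [e₁, e₂, e₃, ← mul_div_mul_left (r * (1 - r ^ (q - p))) _ (rpow_pos_of_pos hr (p - 1)).ne']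
  congr 1 <;> ring

lemma Gb_mul_self {α₀ ζ₁ ζ₂ β x₂ : ℝ} (hα₀ : 0 < α₀) (hβ : 0 < β) (hx₂ : x₂ ≠ 0) :
    Gb α₀ ζ₁ ζ₂ β (β * x₂) x₂ =
      β * x₂ * (1 - (β / α₀) ^ (ζ₂ - ζ₁)) / (ζ₁ - ζ₂ * (β / α₀) ^ (ζ₂ - ζ₁)) := by
  rw [Gb, mul_div_mul_right _ _ hx₂, mul_div_assoc, rpow_sub_rpow_div_eq (div_pos hβ hα₀)]
  field_simp

theorem stmt_7_general (μA μL δ σA σL ρ ζ₁ ζ₂ α₀ β₀ : ℝ)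
    (hμ : μL < μA) (hδ : μA < δ)
    (hroot₁ : (1 / 2) * (σA ^ 2 + σL ^ 2 - 2 * ρ * σA * σL) * ζ₁ * (ζ₁ - 1)
      + (μA - μL) * ζ₁ + (μL - δ) = 0)
    (hroot₂ : (1 / 2) * (σA ^ 2 + σL ^ 2 - 2 * ρ * σA * σL) * ζ₂ * (ζ₂ - 1)
      + (μA - μL) * ζ₂ + (μL - δ) = 0)
    (hζlt : ζ₁ < ζ₂) (hζ₁ : ζ₁ < 0) (hζ₂ : 1 < ζ₂)
    (hα₀ : 0 < α₀)
    (hβ₀ : β₀ = α₀ * (ζ₁ * (ζ₁ - 1) / (ζ₂ * (ζ₂ - 1))) ^ (1 / (ζ₂ - ζ₁))) :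
    ∀ x₂ : ℝ, 0 < x₂ →
      Gb α₀ ζ₁ ζ₂ β₀ (β₀ * x₂) x₂ = β₀ * x₂ * (μA - μL) / (δ - μL) := by
  intro x₂ hx₂
  have hq₂ : 0 < ζ₂ * (ζ₂ - 1) := by nlinarith
  have hroots := quadratic_roots_one_sub_ratio hζlt.ne hq₂.ne' hroot₁ hroot₂
  set c := ζ₁ * (ζ₁ - 1) / (ζ₂ * (ζ₂ - 1))
  have hc : 0 < c := div_pos (by nlinarith) hq₂
  have hβ₀_pos : 0 < β₀ := hβ₀ ▸ mul_pos hα₀ (rpow_pos_of_pos hc _)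
  have hratio : (β₀ / α₀) ^ (ζ₂ - ζ₁) = c := by
    rw [hβ₀, mul_div_cancel_left₀ _ hα₀.ne', one_div, rpow_inv_rpow hc.le (sub_ne_zero.2 hζlt.ne')]
  have hden : ζ₁ - ζ₂ * c < 0 := by nlinarith
  rw [Gb_mul_self hα₀ hβ₀_pos hx₂.ne', hratio, div_eq_div_iff hden.ne (by linarith)]
  linear_combination (-(β₀ * x₂)) * hroots

/-- value of the barrier-strategy value function at the optimal
barrier: `G(β₀* x₂, x₂; β₀*) = β₀* x₂ (μ_A − μ_L)/(δ − μ_L)`. -/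
theorem stmt_7 (μA μL δ σA σL ρ ζ₁ ζ₂ α₀ β₀ : ℝ)
    (hσA : 0 < σA) (hσL : 0 < σL) (hρ₁ : -1 < ρ) (hρ₂ : ρ < 1)
    (hμ : μL < μA) (hδ : μA < δ)
    (hroot₁ : (1 / 2) * (σA ^ 2 + σL ^ 2 - 2 * ρ * σA * σL) * ζ₁ * (ζ₁ - 1)
      + (μA - μL) * ζ₁ + (μL - δ) = 0)
    (hroot₂ : (1 / 2) * (σA ^ 2 + σL ^ 2 - 2 * ρ * σA * σL) * ζ₂ * (ζ₂ - 1)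
      + (μA - μL) * ζ₂ + (μL - δ) = 0)
    (hζlt : ζ₁ < ζ₂) (hζ₁ : ζ₁ < 0) (hζ₂ : 1 < ζ₂)
    (hα₀ : 0 < α₀)
    (hβ₀ : β₀ = α₀ * (ζ₁ * (ζ₁ - 1) / (ζ₂ * (ζ₂ - 1))) ^ (1 / (ζ₂ - ζ₁))) :
    ∀ x₂ : ℝ, 0 < x₂ →
      Gb α₀ ζ₁ ζ₂ β₀ (β₀ * x₂) x₂ = β₀ * x₂ * (μA - μL) / (δ - μL) :=
  stmt_7_general μA μL δ σA σL ρ ζ₁ ζ₂ α₀ β₀ hμ hδ hroot₁ hroot₂ hζlt hζ₁ hζ₂ hα₀ hβ₀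
end

section
/- For every α ≥ β₀* and every x₂ > 0, one has G(α x₂, x₂; α) ≥ (α/β₀*) · G(β₀* x₂, x₂; β₀*). -/
/-!
On the diagonal `x₁ = β x₂` the common factor `(β/α₀)^(ζ₁-1)` cancels from numerator and
denominator of `G`, leaving `G(βx₂, x₂; β) = β x₂ · r((β/α₀)^(ζ₂-ζ₁))` with
`r(t) = (t - 1)/(ζ₂ t - ζ₁)`. Hence `(α/β₀) G(β₀x₂, x₂; β₀) = α x₂ · r((β₀/α₀)^(ζ₂-ζ₁))`, and the
claim is that `r` is monotone on `(0, ∞)`, since `r' = (ζ₂ - ζ₁)/(ζ₂ t - ζ₁)² ≥ 0`.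
-/

open Real Set

lemma monotoneOn_sub_one_div_mul_sub {ζ₁ ζ₂ : ℝ} (hζ₁ : ζ₁ < 0) (hζ₂ : 0 ≤ ζ₂) :
    MonotoneOn (fun t => (t - 1) / (ζ₂ * t - ζ₁)) (Ioi 0) := by
  intro s hs t ht hst
  have hDs : 0 < ζ₂ * s - ζ₁ := by nlinarith [mem_Ioi.1 hs]
  have hDt : 0 < ζ₂ * t - ζ₁ := by nlinarith [mem_Ioi.1 ht]
  rw [div_le_div_iff₀ hDs hDt]
  nlinarith [mul_nonneg (sub_nonneg.2 (hζ₁.le.trans hζ₂)) (sub_nonneg.2 hst)]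

lemma Gb_diagonal (α₀ ζ₁ ζ₂ : ℝ) {β x₂ : ℝ} (hw : 0 < β / α₀) (hx₂ : 0 < x₂) :
    Gb α₀ ζ₁ ζ₂ β (β * x₂) x₂ =
      β * x₂ * (((β / α₀) ^ (ζ₂ - ζ₁) - 1) / (ζ₂ * (β / α₀) ^ (ζ₂ - ζ₁) - ζ₁)) := by
  have hα₀ : α₀ ≠ 0 := by rintro rfl; simp at hw
  set w := β / α₀
  set t := w ^ (ζ₂ - ζ₁)
  have hratio : β * x₂ / (α₀ * x₂) = w := mul_div_mul_right β α₀ hx₂.ne'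
  have hc : w ^ (ζ₁ - 1) ≠ 0 := (rpow_pos_of_pos hw _).ne'
  have hnum : w ^ ζ₁ - w ^ ζ₂ = w ^ (ζ₁ - 1) * (w * (1 - t)) := by
    have h₁ : w ^ ζ₁ = w ^ (ζ₁ - 1) * w := by rw [← rpow_add_one hw.ne']; ring_nf
    have h₂ : w ^ ζ₂ = w ^ (ζ₁ - 1) * w * t := by
      rw [← rpow_add_one hw.ne', ← rpow_add hw]; ring_nf
    rw [h₁, h₂]
    ring
  have hden : ζ₁ * w ^ (ζ₁ - 1) - ζ₂ * w ^ (ζ₂ - 1) = w ^ (ζ₁ - 1) * (ζ₁ - ζ₂ * t) := by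
    rw [show w ^ (ζ₂ - 1) = w ^ (ζ₁ - 1) * t by rw [← rpow_add hw]; ring_nf]
    ring
  rw [Gb, hratio, hnum, hden, mul_left_comm, mul_div_mul_left _ _ hc,
    ← neg_div_neg_eq, (mul_div_cancel₀ β hα₀).symm]
  ring

theorem stmt_8_general (ζ₁ ζ₂ α₀ β₀ : ℝ)
    (hζ₁ : ζ₁ < 0) (hζ₂ : 1 < ζ₂)
    (hα₀ : 0 < α₀)
    (hβ₀ : β₀ = α₀ * (ζ₁ * (ζ₁ - 1) / (ζ₂ * (ζ₂ - 1))) ^ (1 / (ζ₂ - ζ₁))) :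
    ∀ α : ℝ, β₀ ≤ α → ∀ x₂ : ℝ, 0 < x₂ →
      (α / β₀) * Gb α₀ ζ₁ ζ₂ β₀ (β₀ * x₂) x₂ ≤ Gb α₀ ζ₁ ζ₂ α (α * x₂) x₂ := by
  intro α hα x₂ hx₂
  have hβ₀pos : 0 < β₀ :=
    hβ₀ ▸ mul_pos hα₀ (rpow_pos_of_pos (div_pos (by nlinarith) (by nlinarith)) _)
  have hu : 0 < β₀ / α₀ := div_pos hβ₀pos hα₀
  have hαpos : 0 < α := hβ₀pos.trans_le hα
  have hv : 0 < α / α₀ := div_pos hαpos hα₀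
  have hr := monotoneOn_sub_one_div_mul_sub hζ₁ (zero_le_one.trans hζ₂.le)
    (rpow_pos_of_pos hu (ζ₂ - ζ₁)) (rpow_pos_of_pos hv (ζ₂ - ζ₁))
    (rpow_le_rpow hu.le (div_le_div_of_nonneg_right hα hα₀.le) (by linarith))
  rw [Gb_diagonal α₀ ζ₁ ζ₂ hu hx₂, Gb_diagonal α₀ ζ₁ ζ₂ hv hx₂,
    ← mul_assoc, ← mul_assoc, div_mul_cancel₀ _ hβ₀pos.ne']
  exact mul_le_mul_of_nonneg_left hr (by positivity)

/-- for every `α ≥ β₀*` and `x₂ > 0`,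
`G(αx₂, x₂; α) ≥ (α/β₀*) G(β₀*x₂, x₂; β₀*)`. -/
theorem stmt_8 (μA μL δ σA σL ρ ζ₁ ζ₂ α₀ β₀ : ℝ)
    (hσA : 0 < σA) (hσL : 0 < σL) (hρ₁ : -1 < ρ) (hρ₂ : ρ < 1)
    (hμ : μL < μA) (hδ : μA < δ)
    (hroot₁ : (1 / 2) * (σA ^ 2 + σL ^ 2 - 2 * ρ * σA * σL) * ζ₁ * (ζ₁ - 1)
      + (μA - μL) * ζ₁ + (μL - δ) = 0)
    (hroot₂ : (1 / 2) * (σA ^ 2 + σL ^ 2 - 2 * ρ * σA * σL) * ζ₂ * (ζ₂ - 1)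
      + (μA - μL) * ζ₂ + (μL - δ) = 0)
    (hζlt : ζ₁ < ζ₂) (hζ₁ : ζ₁ < 0) (hζ₂ : 1 < ζ₂)
    (hα₀ : 0 < α₀)
    (hβ₀ : β₀ = α₀ * (ζ₁ * (ζ₁ - 1) / (ζ₂ * (ζ₂ - 1))) ^ (1 / (ζ₂ - ζ₁))) :
    ∀ α : ℝ, β₀ ≤ α → ∀ x₂ : ℝ, 0 < x₂ →
      (α / β₀) * Gb α₀ ζ₁ ζ₂ β₀ (β₀ * x₂) x₂ ≤ Gb α₀ ζ₁ ζ₂ α (α * x₂) x₂ :=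
  stmt_8_general ζ₁ ζ₂ α₀ β₀ hζ₁ hζ₂ hα₀ hβ₀
end

section
/- For all x₁, x₂ > 0 with α₀ ≤ x₁/x₂ ≤ β₀*, the marginal value of assets is at least one: ∂G/∂x₁ (x₁, x₂; β₀*) ≥ 1. -/
set_option maxHeartbeats 2000000 in
/-- the marginal value of assets is at least one on the
continuation region: `∂G/∂x₁(x₁,x₂;β₀*) ≥ 1` for `α₀ ≤ x₁/x₂ ≤ β₀*`. -/
theorem stmt_10 (μA μL δ σA σL ρ ζ₁ ζ₂ α₀ β₀ : ℝ)
    (hσA : 0 < σA) (hσL : 0 < σL) (hρ₁ : -1 < ρ) (hρ₂ : ρ < 1)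
    (hμ : μL < μA) (hδ : μA < δ)
    (hroot₁ : (1 / 2) * (σA ^ 2 + σL ^ 2 - 2 * ρ * σA * σL) * ζ₁ * (ζ₁ - 1)
      + (μA - μL) * ζ₁ + (μL - δ) = 0)
    (hroot₂ : (1 / 2) * (σA ^ 2 + σL ^ 2 - 2 * ρ * σA * σL) * ζ₂ * (ζ₂ - 1)
      + (μA - μL) * ζ₂ + (μL - δ) = 0)
    (hζlt : ζ₁ < ζ₂) (hζ₁ : ζ₁ < 0) (hζ₂ : 1 < ζ₂)
    (hα₀ : 0 < α₀)
    (hβ₀ : β₀ = α₀ * (ζ₁ * (ζ₁ - 1) / (ζ₂ * (ζ₂ - 1))) ^ (1 / (ζ₂ - ζ₁))) :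
    ∀ x₁ x₂ : ℝ, 0 < x₁ → 0 < x₂ → α₀ ≤ x₁ / x₂ → x₁ / x₂ ≤ β₀ →
      1 ≤ deriv (fun t => Gb α₀ ζ₁ ζ₂ β₀ t x₂) x₁ := by
  intro x₁ x₂ hx₁ hx₂ hlo hhi
  -- basic quantities
  set A : ℝ := ζ₁ * (ζ₁ - 1) with hA
  set B : ℝ := ζ₂ * (ζ₂ - 1) with hB
  have hApos : 0 < A := by rw [hA]; nlinarith
  have hBpos : 0 < B := by rw [hB]; nlinarith
  have hσ : 0 < σA ^ 2 + σL ^ 2 - 2 * ρ * σA * σL := by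
    nlinarith [sq_nonneg (σA - σL), mul_pos hσA hσL]
  -- sum of roots is less than 1
  have hfac : (ζ₁ - ζ₂) * ((1 / 2) * (σA ^ 2 + σL ^ 2 - 2 * ρ * σA * σL) * (ζ₁ + ζ₂ - 1)
      + (μA - μL)) = 0 := by linear_combination hroot₁ - hroot₂
  have hsum : ζ₁ + ζ₂ < 1 := by
    rcases mul_eq_zero.1 hfac with h | h
    · exact absurd h (by intro h'; linarith)
    · by_contra hc
      push_neg at hc
      linarith [mul_nonneg hσ.le (by linarith : (0:ℝ) ≤ ζ₁ + ζ₂ - 1), h]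
  have hAB : B < A := by rw [hA, hB]; nlinarith
  have hABdiv : (1:ℝ) < A / B := (one_lt_div hBpos).2 hAB
  -- the barrier ratio b
  set b : ℝ := β₀ / α₀ with hbdef
  have hζne : ζ₂ - ζ₁ ≠ 0 := sub_ne_zero_of_ne hζlt.ne'
  have hb : b = (A / B) ^ (1 / (ζ₂ - ζ₁)) := by
    rw [hbdef, hβ₀]; field_simp
  have hb1 : 1 ≤ b := by
    rw [hb]; exact Real.one_le_rpow hABdiv.le (le_of_lt (one_div_pos.2 (by linarith)))
  have hb0 : 0 < b := lt_of_lt_of_le one_pos hb1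
  have hbpow : b ^ (ζ₂ - ζ₁) = A / B := by
    rw [hb, ← Real.rpow_mul (div_pos hApos hBpos).le, one_div, inv_mul_cancel₀ hζne, Real.rpow_one]
  -- u
  set c : ℝ := α₀ * x₂ with hcdef
  have hc0 : 0 < c := by positivity
  set u : ℝ := x₁ / c with hudef
  have hu1 : 1 ≤ u := by
    rw [hudef, le_div_iff₀ hc0, one_mul, hcdef]
    calc α₀ * x₂ ≤ (x₁ / x₂) * x₂ := by nlinarith
    _ = x₁ := by field_simp
  have hu0 : 0 < u := lt_of_lt_of_le one_pos hu1
  have hub : u ≤ b := by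
    rw [hudef, hbdef, hcdef, div_le_div_iff₀ (by positivity) hα₀]
    have : x₁ ≤ β₀ * x₂ := by
      have := (div_le_iff₀ hx₂).1 hhi; linarith
    nlinarith
  -- the function f
  set f : ℝ → ℝ := fun v => ζ₁ * v ^ (ζ₁ - 1) - ζ₂ * v ^ (ζ₂ - 1) with hfdef
  have hfb_neg : f b < 0 := by
    have h1 : 0 < b ^ (ζ₁ - 1) := Real.rpow_pos_of_pos hb0 _
    have h2 : 0 < b ^ (ζ₂ - 1) := Real.rpow_pos_of_pos hb0 _
    have : ζ₁ * b ^ (ζ₁ - 1) < 0 := mul_neg_of_neg_of_pos hζ₁ h1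
    have : 0 < ζ₂ * b ^ (ζ₂ - 1) := mul_pos (by linarith) h2
    simp only [hfdef]; linarith
  -- f is monotone on [1, b]
  have hmono : MonotoneOn f (Set.Icc 1 b) := by
    apply monotoneOn_of_deriv_nonneg (convex_Icc 1 b)
    · apply ContinuousOn.sub
      · exact continuousOn_const.mul (continuousOn_id.rpow_const fun v hv =>
          Or.inl (ne_of_gt (lt_of_lt_of_le one_pos hv.1)))
      · exact continuousOn_const.mul (continuousOn_id.rpow_const fun v hv =>
          Or.inl (ne_of_gt (lt_of_lt_of_le one_pos hv.1)))
    · rw [interior_Icc]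
      intro v hv
      have hv0 : v ≠ 0 := ne_of_gt (lt_trans one_pos hv.1)
      exact (((Real.hasDerivAt_rpow_const (p := ζ₁ - 1) (Or.inl hv0)).const_mul ζ₁).sub
        ((Real.hasDerivAt_rpow_const (p := ζ₂ - 1) (Or.inl hv0)).const_mul ζ₂)).differentiableAt.differentiableWithinAt
    · rw [interior_Icc]
      intro v hv
      have hv0 : (0:ℝ) < v := lt_trans one_pos hv.1
      have hder : HasDerivAt f (ζ₁ * ((ζ₁ - 1) * v ^ (ζ₁ - 1 - 1)) -
          ζ₂ * ((ζ₂ - 1) * v ^ (ζ₂ - 1 - 1))) v :=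
        ((Real.hasDerivAt_rpow_const (p := ζ₁ - 1) (Or.inl hv0.ne')).const_mul ζ₁).sub
          ((Real.hasDerivAt_rpow_const (p := ζ₂ - 1) (Or.inl hv0.ne')).const_mul ζ₂)
      rw [hder.deriv]
      have hvpow : v ^ (ζ₂ - ζ₁) ≤ A / B := by
        rw [← hbpow]
        exact Real.rpow_le_rpow hv0.le hv.2.le (by linarith)
      have hsplit : v ^ (ζ₂ - 1 - 1) = v ^ (ζ₁ - 1 - 1) * v ^ (ζ₂ - ζ₁) := by
        rw [← Real.rpow_add hv0]; ring_nf
      have hp1 : 0 < v ^ (ζ₁ - 1 - 1) := Real.rpow_pos_of_pos hv0 _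
      have hBv : B * v ^ (ζ₂ - ζ₁) ≤ A := by
        have := mul_le_mul_of_nonneg_left hvpow hBpos.le
        rwa [mul_div_cancel₀ _ (ne_of_gt hBpos)] at this
      rw [hsplit]
      have h0 : 0 ≤ v ^ (ζ₁ - 1 - 1) * (A - B * v ^ (ζ₂ - ζ₁)) :=
        mul_nonneg hp1.le (by linarith)
      have h2 : ζ₁ * ((ζ₁ - 1) * v ^ (ζ₁ - 1 - 1)) -
          ζ₂ * ((ζ₂ - 1) * (v ^ (ζ₁ - 1 - 1) * v ^ (ζ₂ - ζ₁))) =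
          v ^ (ζ₁ - 1 - 1) * (A - B * v ^ (ζ₂ - ζ₁)) := by rw [hA, hB]; ring
      linarith [h0, h2.ge, h2.le]
  have hfle : f u ≤ f b := hmono ⟨hu1, hub⟩ ⟨hb1, le_refl b⟩ hub
  -- compute the derivative
  have hune : x₁ / c ≠ 0 := ne_of_gt hu0
  have hdiv : HasDerivAt (fun t : ℝ => t / c) (1 / c) x₁ := by
    simpa using (hasDerivAt_id x₁).div_const c
  have h1 : HasDerivAt (fun t : ℝ => (t / c) ^ ζ₁) (1 / c * ζ₁ * (x₁ / c) ^ (ζ₁ - 1)) x₁ :=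
    hdiv.rpow_const (Or.inl hune)
  have h2 : HasDerivAt (fun t : ℝ => (t / c) ^ ζ₂) (1 / c * ζ₂ * (x₁ / c) ^ (ζ₂ - 1)) x₁ :=
    hdiv.rpow_const (Or.inl hune)
  have hG : HasDerivAt (fun t => Gb α₀ ζ₁ ζ₂ β₀ t x₂)
      (α₀ * x₂ * (1 / c * ζ₁ * (x₁ / c) ^ (ζ₁ - 1) - 1 / c * ζ₂ * (x₁ / c) ^ (ζ₂ - 1)) /
        (ζ₁ * (β₀ / α₀) ^ (ζ₁ - 1) - ζ₂ * (β₀ / α₀) ^ (ζ₂ - 1))) x₁ := by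
    have := ((h1.sub h2).const_mul (α₀ * x₂)).div_const
      (ζ₁ * (β₀ / α₀) ^ (ζ₁ - 1) - ζ₂ * (β₀ / α₀) ^ (ζ₂ - 1))
    simpa [Gb, hcdef, mul_comm] using this
  rw [hG.deriv]
  have heq : α₀ * x₂ * (1 / c * ζ₁ * (x₁ / c) ^ (ζ₁ - 1) - 1 / c * ζ₂ * (x₁ / c) ^ (ζ₂ - 1)) /
      (ζ₁ * (β₀ / α₀) ^ (ζ₁ - 1) - ζ₂ * (β₀ / α₀) ^ (ζ₂ - 1)) = f u / f b := by
    rw [hfdef]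
    simp only [← hudef, ← hbdef, ← hcdef]
    field_simp
  rw [heq, le_div_iff_of_neg hfb_neg, one_mul]
  exact hfle
end

section
/- For every α ≥ β₀*, every x₂ > 0 and every x₁ ≥ α x₂, one has (μ_A − δ) x₁ + (δ − μ_L) α x₂ + (μ_L − δ) G(α x₂, x₂; α) ≤ 0. (This is the key inequality showing that the generator acting on the value function of the barrier strategy at level α is nonpositive above the barrier.) -/
lemma sq_add_sq_sub_two_mul_mul_nonneg {a b ρ : ℝ} (h₁ : -1 ≤ ρ) (h₂ : ρ ≤ 1) :
    0 ≤ a ^ 2 + b ^ 2 - 2 * ρ * a * b := by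
  have h : 0 ≤ (1 - ρ ^ 2) * b ^ 2 :=
    mul_nonneg (by nlinarith) (sq_nonneg b)
  nlinarith [sq_nonneg (a - ρ * b)]

lemma mul_rpow_le_mul_rpow_of_div_le_rpow_sub {r A B p q : ℝ} (hr : 0 < r) (hB : 0 < B)
    (h : A / B ≤ r ^ (q - p)) : A * r ^ p ≤ B * r ^ q := by
  have hq : r ^ q = r ^ (q - p) * r ^ p := by
    rw [← Real.rpow_add hr, sub_add_cancel]
  rw [hq, ← mul_assoc]
  exact mul_le_mul_of_nonneg_right ((div_le_iff₀' hB).1 h) (Real.rpow_nonneg hr.le p)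

lemma Gb_self_mul (ζ₁ ζ₂ : ℝ) {α₀ β x₂ : ℝ} (hα₀ : 0 < α₀) (hβ : 0 < β) (hx₂ : x₂ ≠ 0) :
    Gb α₀ ζ₁ ζ₂ β (β * x₂) x₂ = β * x₂ * ((β / α₀) ^ ζ₁ - (β / α₀) ^ ζ₂) /
      (ζ₁ * (β / α₀) ^ ζ₁ - ζ₂ * (β / α₀) ^ ζ₂) := by
  have hr : 0 < β / α₀ := div_pos hβ hα₀
  unfold Gb
  rw [mul_div_mul_right _ _ hx₂, Real.rpow_sub hr, Real.rpow_sub hr, Real.rpow_one]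
  field_simp

/-- With `c ζ(ζ-1) + m ζ + k` the characteristic quadratic, this is the generator applied to the
value function at the barrier, `y` standing for `α x₂` and `a, b` for `r^ζ₁, r^ζ₂`. -/
lemma generator_at_barrier_nonpos {c m k ζ₁ ζ₂ a b y : ℝ} (hc : 0 ≤ c)
    (hroot₁ : c * ζ₁ * (ζ₁ - 1) + m * ζ₁ + k = 0) (hroot₂ : c * ζ₂ * (ζ₂ - 1) + m * ζ₂ + k = 0)
    (hD : ζ₁ * a - ζ₂ * b < 0) (hab : ζ₁ * (ζ₁ - 1) * a ≤ ζ₂ * (ζ₂ - 1) * b) (hy : 0 ≤ y) :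
    m * y + k * (y * (a - b) / (ζ₁ * a - ζ₂ * b)) ≤ 0 := by
  have hroots : m * (ζ₁ * a - ζ₂ * b) + k * (a - b)
      = c * (ζ₂ * (ζ₂ - 1) * b - ζ₁ * (ζ₁ - 1) * a) := by
    linear_combination a * hroot₁ - b * hroot₂
  have hnum : 0 ≤ y * (m * (ζ₁ * a - ζ₂ * b) + k * (a - b)) := by
    rw [hroots]
    exact mul_nonneg hy (mul_nonneg hc (sub_nonneg.2 hab))
  rw [mul_div_assoc', add_div' _ _ _ hD.ne]
  exact div_nonpos_of_nonneg_of_nonpos (by linarith) hD.le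

theorem stmt_11_general (μA μL δ σA σL ρ ζ₁ ζ₂ α₀ β₀ : ℝ)
    (hρ₁ : -1 < ρ) (hρ₂ : ρ < 1)
    (hδ : μA < δ)
    (hroot₁ : (1 / 2) * (σA ^ 2 + σL ^ 2 - 2 * ρ * σA * σL) * ζ₁ * (ζ₁ - 1)
      + (μA - μL) * ζ₁ + (μL - δ) = 0)
    (hroot₂ : (1 / 2) * (σA ^ 2 + σL ^ 2 - 2 * ρ * σA * σL) * ζ₂ * (ζ₂ - 1)
      + (μA - μL) * ζ₂ + (μL - δ) = 0)
    (hζ₁ : ζ₁ < 0) (hζ₂ : 1 < ζ₂)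
    (hα₀ : 0 < α₀)
    (hβ₀ : β₀ = α₀ * (ζ₁ * (ζ₁ - 1) / (ζ₂ * (ζ₂ - 1))) ^ (1 / (ζ₂ - ζ₁))) :
    ∀ α : ℝ, β₀ ≤ α → ∀ x₂ : ℝ, 0 < x₂ → ∀ x₁ : ℝ, α * x₂ ≤ x₁ →
      (μA - δ) * x₁ + (δ - μL) * α * x₂
        + (μL - δ) * Gb α₀ ζ₁ ζ₂ α (α * x₂) x₂ ≤ 0 := by
  intro α hα x₂ hx₂ x₁ hx₁
  set r := α / α₀
  have hK₂ : 0 < ζ₂ * (ζ₂ - 1) := mul_pos (by linarith) (by linarith)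
  have hK : 0 < ζ₁ * (ζ₁ - 1) / (ζ₂ * (ζ₂ - 1)) :=
    div_pos (mul_pos_of_neg_of_neg hζ₁ (by linarith)) hK₂
  have hαpos : 0 < α := lt_of_lt_of_le (by rw [hβ₀]; positivity) hα
  have hr : 0 < r := div_pos hαpos hα₀
  have hKr : ζ₁ * (ζ₁ - 1) / (ζ₂ * (ζ₂ - 1)) ≤ r ^ (ζ₂ - ζ₁) := by
    rw [← Real.rpow_inv_le_iff_of_pos hK.le hr.le (by linarith), le_div_iff₀' hα₀, ← one_div]
    exact hβ₀ ▸ hα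
  have hab := mul_rpow_le_mul_rpow_of_div_le_rpow_sub hr hK₂ hKr
  have hD : ζ₁ * r ^ ζ₁ - ζ₂ * r ^ ζ₂ < 0 := by
    nlinarith [Real.rpow_pos_of_pos hr ζ₁, Real.rpow_pos_of_pos hr ζ₂]
  have hc : 0 ≤ 1 / 2 * (σA ^ 2 + σL ^ 2 - 2 * ρ * σA * σL) :=
    mul_nonneg (by norm_num) (sq_add_sq_sub_two_mul_mul_nonneg hρ₁.le hρ₂.le)
  have hbarrier := generator_at_barrier_nonpos hc hroot₁ hroot₂ hD hab (mul_pos hαpos hx₂).le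
  rw [Gb_self_mul ζ₁ ζ₂ hα₀ hαpos hx₂.ne']
  linarith [mul_le_mul_of_nonpos_left hx₁ (sub_nonpos.2 hδ.le)]

/-- the key inequality above the barrier:
`(μA − δ)x₁ + (δ − μL)αx₂ + (μL − δ)G(αx₂, x₂; α) ≤ 0` whenever `α ≥ β₀*`,
`x₂ > 0` and `x₁ ≥ αx₂`. -/
theorem stmt_11 (μA μL δ σA σL ρ ζ₁ ζ₂ α₀ β₀ : ℝ)
    (hσA : 0 < σA) (hσL : 0 < σL) (hρ₁ : -1 < ρ) (hρ₂ : ρ < 1)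
    (hμ : μL < μA) (hδ : μA < δ)
    (hroot₁ : (1 / 2) * (σA ^ 2 + σL ^ 2 - 2 * ρ * σA * σL) * ζ₁ * (ζ₁ - 1)
      + (μA - μL) * ζ₁ + (μL - δ) = 0)
    (hroot₂ : (1 / 2) * (σA ^ 2 + σL ^ 2 - 2 * ρ * σA * σL) * ζ₂ * (ζ₂ - 1)
      + (μA - μL) * ζ₂ + (μL - δ) = 0)
    (hζlt : ζ₁ < ζ₂) (hζ₁ : ζ₁ < 0) (hζ₂ : 1 < ζ₂)
    (hα₀ : 0 < α₀)
    (hβ₀ : β₀ = α₀ * (ζ₁ * (ζ₁ - 1) / (ζ₂ * (ζ₂ - 1))) ^ (1 / (ζ₂ - ζ₁))) :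
    ∀ α : ℝ, β₀ ≤ α → ∀ x₂ : ℝ, 0 < x₂ → ∀ x₁ : ℝ, α * x₂ ≤ x₁ →
      (μA - δ) * x₁ + (δ - μL) * α * x₂
        + (μL - δ) * Gb α₀ ζ₁ ζ₂ α (α * x₂) x₂ ≤ 0 :=
  stmt_11_general μA μL δ σA σL ρ ζ₁ ζ₂ α₀ β₀ hρ₁ hρ₂ hδ hroot₁ hroot₂ hζ₁ hζ₂ hα₀ hβ₀
end

section
/- The two-barrier function G(·,·;β,γ) satisfies: (i) 𝒜G(x₁,x₂;β,γ) − δG(x₁,x₂;β,γ) = 0 for all x₁, x₂ > 0; (ii) ∂G/∂x₁ (βx₂, x₂; β,γ) = 1 for all x₂ > 0; and (iii) ∂G/∂x₁ (γx₂, x₂; β,γ) = κ for all x₂ > 0. -/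
/-- The constant `C₁` of the two-barrier value function. -/
noncomputable def C1 (ζ₁ ζ₂ β γ κ : ℝ) : ℝ :=
  (1 - κ * β ^ (ζ₂ - 1) * γ ^ (1 - ζ₂)) /
    (ζ₁ * (β ^ (ζ₁ - 1) - γ ^ (ζ₁ - ζ₂) * β ^ (ζ₂ - 1)))

/-- The constant `C₂` of the two-barrier value function. -/
noncomputable def C2 (ζ₁ ζ₂ β γ κ : ℝ) : ℝ :=
  (κ * γ ^ (1 - ζ₂) - C1 ζ₁ ζ₂ β γ κ * ζ₁ * γ ^ (ζ₁ - ζ₂)) / ζ₂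

/-- The two-barrier value function `G(x₁, x₂; β, γ)` with dividend barrier `β`
and capital injection barrier `γ`. -/
noncomputable def G2 (ζ₁ ζ₂ β γ κ x₁ x₂ : ℝ) : ℝ :=
  C1 ζ₁ ζ₂ β γ κ * x₁ ^ ζ₁ * x₂ ^ (1 - ζ₁)
    + C2 ζ₁ ζ₂ β γ κ * x₁ ^ ζ₂ * x₂ ^ (1 - ζ₂)

open Real

section PowerSum

variable {c a d b x : ℝ}

lemma hasDerivAt_add_rpow (hx : x ≠ 0) :
    HasDerivAt (fun t => c * t ^ a + d * t ^ b)
      (c * a * x ^ (a - 1) + d * b * x ^ (b - 1)) x := by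
  have hc := (hasDerivAt_rpow_const (p := a) (Or.inl hx)).const_mul c
  have hd := (hasDerivAt_rpow_const (p := b) (Or.inl hx)).const_mul d
  exact (hc.add hd).congr_deriv (by ring)

lemma deriv_add_rpow (hx : x ≠ 0) :
    deriv (fun t => c * t ^ a + d * t ^ b) x = c * a * x ^ (a - 1) + d * b * x ^ (b - 1) :=
  (hasDerivAt_add_rpow hx).deriv

lemma deriv_deriv_add_rpow (hx : x ≠ 0) :
    deriv (deriv (fun t => c * t ^ a + d * t ^ b)) x
      = c * a * (a - 1) * x ^ (a - 2) + d * b * (b - 1) * x ^ (b - 2) := by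
  have hfirst : deriv (fun t => c * t ^ a + d * t ^ b) =ᶠ[nhds x]
      fun t => (c * a) * t ^ (a - 1) + (d * b) * t ^ (b - 1) := by
    filter_upwards [eventually_ne_nhds hx] with t ht using deriv_add_rpow ht
  rw [hfirst.deriv_eq, deriv_add_rpow hx]
  ring_nf

lemma rpow_sub_two {x : ℝ} (hx : 0 < x) (p : ℝ) : x ^ (p - 2) = x ^ p / x ^ 2 := by
  rw [rpow_sub hx, rpow_two]

end PowerSum

noncomputable def homPowerPair (c a d b x₁ x₂ : ℝ) : ℝ :=
  c * x₁ ^ a * x₂ ^ (1 - a) + d * x₁ ^ b * x₂ ^ (1 - b)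

noncomputable def charPoly (μA μL δ σA σL ρ ζ : ℝ) : ℝ :=
  (1 / 2) * (σA ^ 2 + σL ^ 2 - 2 * ρ * σA * σL) * ζ * (ζ - 1) + (μA - μL) * ζ + (μL - δ)

section HomPowerPair

variable {c a d b x₁ x₂ : ℝ}

lemma homPowerPair_fst (c a d b y : ℝ) :
    (fun t => homPowerPair c a d b t y)
      = fun t => (c * y ^ (1 - a)) * t ^ a + (d * y ^ (1 - b)) * t ^ b := by
  funext t
  simp only [homPowerPair]
  ring

lemma deriv_homPowerPair_fst (y : ℝ) (hx : x₁ ≠ 0) :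
    deriv (fun t => homPowerPair c a d b t y) x₁
      = c * a * x₁ ^ (a - 1) * y ^ (1 - a) + d * b * x₁ ^ (b - 1) * y ^ (1 - b) := by
  rw [homPowerPair_fst, deriv_add_rpow hx]
  ring

lemma deriv_deriv_homPowerPair_fst (y : ℝ) (hx : x₁ ≠ 0) :
    deriv (deriv (fun t => homPowerPair c a d b t y)) x₁
      = c * a * (a - 1) * x₁ ^ (a - 2) * y ^ (1 - a)
        + d * b * (b - 1) * x₁ ^ (b - 2) * y ^ (1 - b) := by
  rw [homPowerPair_fst, deriv_deriv_add_rpow hx]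
  ring

lemma deriv_homPowerPair_snd (hx₂ : x₂ ≠ 0) :
    deriv (fun t => homPowerPair c a d b x₁ t) x₂
      = c * x₁ ^ a * (1 - a) * x₂ ^ (1 - a - 1) + d * x₁ ^ b * (1 - b) * x₂ ^ (1 - b - 1) :=
  deriv_add_rpow hx₂

lemma deriv_deriv_homPowerPair_snd (hx₂ : x₂ ≠ 0) :
    deriv (deriv (fun t => homPowerPair c a d b x₁ t)) x₂
      = c * x₁ ^ a * (1 - a) * (1 - a - 1) * x₂ ^ (1 - a - 2)
        + d * x₁ ^ b * (1 - b) * (1 - b - 1) * x₂ ^ (1 - b - 2) :=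
  deriv_deriv_add_rpow hx₂

lemma deriv_deriv_homPowerPair_fst_snd (hx₁ : x₁ ≠ 0) (hx₂ : x₂ ≠ 0) :
    deriv (fun u => deriv (fun t => homPowerPair c a d b t u) x₁) x₂
      = c * a * x₁ ^ (a - 1) * (1 - a) * x₂ ^ (1 - a - 1)
        + d * b * x₁ ^ (b - 1) * (1 - b) * x₂ ^ (1 - b - 1) := by
  simp only [deriv_homPowerPair_fst _ hx₁]
  exact deriv_add_rpow hx₂

theorem gen_homPowerPair_sub (μA μL δ σA σL ρ : ℝ) (hx₁ : 0 < x₁) (hx₂ : 0 < x₂) :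
    gen μA μL σA σL ρ (homPowerPair c a d b) x₁ x₂ - δ * homPowerPair c a d b x₁ x₂
      = charPoly μA μL δ σA σL ρ a * (c * x₁ ^ a * x₂ ^ (1 - a))
        + charPoly μA μL δ σA σL ρ b * (d * x₁ ^ b * x₂ ^ (1 - b)) := by
  rw [gen, deriv_homPowerPair_fst _ hx₁.ne', deriv_homPowerPair_snd hx₂.ne',
    deriv_deriv_homPowerPair_fst _ hx₁.ne', deriv_deriv_homPowerPair_snd hx₂.ne',
    deriv_deriv_homPowerPair_fst_snd hx₁.ne' hx₂.ne']
  simp only [rpow_sub_one hx₁.ne', rpow_sub_one hx₂.ne', rpow_sub_two hx₁,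
    rpow_sub_two hx₂, homPowerPair, charPoly]
  field_simp
  ring

lemma deriv_homPowerPair_fst_mul {θ y : ℝ} (hθ : 0 < θ) (hy : 0 < y) :
    deriv (fun t => homPowerPair c a d b t y) (θ * y)
      = c * a * θ ^ (a - 1) + d * b * θ ^ (b - 1) := by
  have hy_cancel (p : ℝ) : y ^ (p - 1) * y ^ (1 - p) = 1 := by
    rw [← rpow_add hy]; norm_num
  rw [deriv_homPowerPair_fst _ (mul_pos hθ hy).ne', mul_rpow hθ.le hy.le,
    mul_rpow hθ.le hy.le]
  linear_combination (c * a * θ ^ (a - 1)) * hy_cancel a + (d * b * θ ^ (b - 1)) * hy_cancel b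

end HomPowerPair

section Constants

variable {ζ₁ ζ₂ β γ κ : ℝ}

lemma C2_mul (ζ₁ β γ κ : ℝ) (hζ₂ : ζ₂ ≠ 0) :
    C2 ζ₁ ζ₂ β γ κ * ζ₂ = κ * γ ^ (1 - ζ₂) - C1 ζ₁ ζ₂ β γ κ * ζ₁ * γ ^ (ζ₁ - ζ₂) :=
  div_mul_cancel₀ _ hζ₂

lemma C1_denom_ne_zero (hζ : ζ₁ < ζ₂) (hγ : 0 < γ) (hβγ : γ < β) :
    β ^ (ζ₁ - 1) - γ ^ (ζ₁ - ζ₂) * β ^ (ζ₂ - 1) ≠ 0 := by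
  have hβ : 0 < β := hγ.trans hβγ
  have hsplit : β ^ (ζ₁ - 1) = β ^ (ζ₁ - ζ₂) * β ^ (ζ₂ - 1) := by
    rw [← rpow_add hβ]; ring_nf
  have hlt : β ^ (ζ₁ - ζ₂) < γ ^ (ζ₁ - ζ₂) := rpow_lt_rpow_of_neg hγ hβγ (by linarith)
  rw [hsplit, ← sub_mul]
  exact mul_ne_zero (sub_ne_zero.mpr hlt.ne) (rpow_pos_of_pos hβ _).ne'

lemma C1_C2_smooth_fit_beta (hζ : ζ₁ < ζ₂) (hζ₁ : ζ₁ ≠ 0) (hζ₂ : ζ₂ ≠ 0) (hγ : 0 < γ)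
    (hβγ : γ < β) :
    C1 ζ₁ ζ₂ β γ κ * ζ₁ * β ^ (ζ₁ - 1) + C2 ζ₁ ζ₂ β γ κ * ζ₂ * β ^ (ζ₂ - 1) = 1 := by
  have hC1 : C1 ζ₁ ζ₂ β γ κ * (ζ₁ * (β ^ (ζ₁ - 1) - γ ^ (ζ₁ - ζ₂) * β ^ (ζ₂ - 1)))
      = 1 - κ * β ^ (ζ₂ - 1) * γ ^ (1 - ζ₂) :=
    div_mul_cancel₀ _ (mul_ne_zero hζ₁ (C1_denom_ne_zero hζ hγ hβγ))
  linear_combination hC1 + β ^ (ζ₂ - 1) * C2_mul ζ₁ β γ κ hζ₂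

lemma C1_C2_smooth_fit_gamma (hζ₂ : ζ₂ ≠ 0) (hγ : 0 < γ) :
    C1 ζ₁ ζ₂ β γ κ * ζ₁ * γ ^ (ζ₁ - 1) + C2 ζ₁ ζ₂ β γ κ * ζ₂ * γ ^ (ζ₂ - 1) = κ := by
  have hsplit : γ ^ (ζ₁ - 1) = γ ^ (ζ₁ - ζ₂) * γ ^ (ζ₂ - 1) := by
    rw [← rpow_add hγ]; ring_nf
  have hcancel : γ ^ (1 - ζ₂) * γ ^ (ζ₂ - 1) = 1 := by
    rw [← rpow_add hγ]; norm_num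
  linear_combination γ ^ (ζ₂ - 1) * C2_mul ζ₁ β γ κ hζ₂
    + C1 ζ₁ ζ₂ β γ κ * ζ₁ * hsplit + κ * hcancel

end Constants

theorem stmt_12_general (μA μL δ σA σL ρ ζ₁ ζ₂ β γ κ : ℝ)
    (hroot₁ : (1 / 2) * (σA ^ 2 + σL ^ 2 - 2 * ρ * σA * σL) * ζ₁ * (ζ₁ - 1)
      + (μA - μL) * ζ₁ + (μL - δ) = 0)
    (hroot₂ : (1 / 2) * (σA ^ 2 + σL ^ 2 - 2 * ρ * σA * σL) * ζ₂ * (ζ₂ - 1)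
      + (μA - μL) * ζ₂ + (μL - δ) = 0)
    (hζlt : ζ₁ < ζ₂) (hζ₁ : ζ₁ < 0) (hζ₂ : 1 < ζ₂)
    (hγ : 0 < γ) (hβγ : γ < β) :
    (∀ x₁ x₂ : ℝ, 0 < x₁ → 0 < x₂ →
      gen μA μL σA σL ρ (fun a b => G2 ζ₁ ζ₂ β γ κ a b) x₁ x₂
        - δ * G2 ζ₁ ζ₂ β γ κ x₁ x₂ = 0) ∧
    (∀ x₂ : ℝ, 0 < x₂ → deriv (fun t => G2 ζ₁ ζ₂ β γ κ t x₂) (β * x₂) = 1) ∧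
    (∀ x₂ : ℝ, 0 < x₂ → deriv (fun t => G2 ζ₁ ζ₂ β γ κ t x₂) (γ * x₂) = κ) := by
  have hG : G2 ζ₁ ζ₂ β γ κ = homPowerPair (C1 ζ₁ ζ₂ β γ κ) ζ₁ (C2 ζ₁ ζ₂ β γ κ) ζ₂ := rfl
  have hchar₁ : charPoly μA μL δ σA σL ρ ζ₁ = 0 := hroot₁
  have hchar₂ : charPoly μA μL δ σA σL ρ ζ₂ = 0 := hroot₂
  have hζ₂₀ : ζ₂ ≠ 0 := by linarith
  refine ⟨fun x₁ x₂ hx₁ hx₂ => ?_, fun x₂ hx₂ => ?_, fun x₂ hx₂ => ?_⟩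
  · rw [hG, gen_homPowerPair_sub _ _ _ _ _ _ hx₁ hx₂, hchar₁, hchar₂]
    ring
  · rw [hG, deriv_homPowerPair_fst_mul (hγ.trans hβγ) hx₂]
    exact C1_C2_smooth_fit_beta hζlt hζ₁.ne hζ₂₀ hγ hβγ
  · rw [hG, deriv_homPowerPair_fst_mul hγ hx₂]
    exact C1_C2_smooth_fit_gamma hζ₂₀ hγ

/-- the two-barrier function `G(·,·;β,γ)` solves the generator
equation, has unit marginal value at the dividend barrier `β`, and marginal
value `κ` at the capital injection barrier `γ`. -/
theorem stmt_12 (μA μL δ σA σL ρ ζ₁ ζ₂ β γ κ : ℝ)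
    (hσA : 0 < σA) (hσL : 0 < σL) (hρ₁ : -1 < ρ) (hρ₂ : ρ < 1)
    (hμ : μL < μA) (hδ : μA < δ)
    (hroot₁ : (1 / 2) * (σA ^ 2 + σL ^ 2 - 2 * ρ * σA * σL) * ζ₁ * (ζ₁ - 1)
      + (μA - μL) * ζ₁ + (μL - δ) = 0)
    (hroot₂ : (1 / 2) * (σA ^ 2 + σL ^ 2 - 2 * ρ * σA * σL) * ζ₂ * (ζ₂ - 1)
      + (μA - μL) * ζ₂ + (μL - δ) = 0)
    (hζlt : ζ₁ < ζ₂) (hζ₁ : ζ₁ < 0) (hζ₂ : 1 < ζ₂)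
    (hγ : 0 < γ) (hβγ : γ < β) (hκ : 1 < κ) :
    (∀ x₁ x₂ : ℝ, 0 < x₁ → 0 < x₂ →
      gen μA μL σA σL ρ (fun a b => G2 ζ₁ ζ₂ β γ κ a b) x₁ x₂
        - δ * G2 ζ₁ ζ₂ β γ κ x₁ x₂ = 0) ∧
    (∀ x₂ : ℝ, 0 < x₂ → deriv (fun t => G2 ζ₁ ζ₂ β γ κ t x₂) (β * x₂) = 1) ∧
    (∀ x₂ : ℝ, 0 < x₂ → deriv (fun t => G2 ζ₁ ζ₂ β γ κ t x₂) (γ * x₂) = κ) :=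
  stmt_12_general μA μL δ σA σL ρ ζ₁ ζ₂ β γ κ hroot₁ hroot₂ hζlt hζ₁ hζ₂ hγ hβγ
end

section
/- There exists a unique β > γ such that Ψ(β) = 0. (This β is the optimal dividend barrier β₂* in the model with forced capital injections.) -/
/-- The function `Ψ` whose root determines the optimal dividend barrier in the
model with forced capital injections. -/
noncomputable def Psi (ζ₁ ζ₂ γ κ β : ℝ) : ℝ :=
  ζ₁ * (κ * (ζ₁ - ζ₂) * γ ^ (1 - ζ₂) * β ^ ζ₁
    + (ζ₂ - 1) * γ ^ (ζ₁ - ζ₂) * β + (1 - ζ₁) * β ^ (1 + ζ₁ - ζ₂))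

/-- there exists a unique `β > γ` such that `Ψ(β) = 0`. -/
theorem stmt_13 (μA μL δ σA σL ρ ζ₁ ζ₂ γ κ : ℝ)
    (hσA : 0 < σA) (hσL : 0 < σL) (hρ₁ : -1 < ρ) (hρ₂ : ρ < 1)
    (hμ : μL < μA) (hδ : μA < δ)
    (hroot₁ : (1 / 2) * (σA ^ 2 + σL ^ 2 - 2 * ρ * σA * σL) * ζ₁ * (ζ₁ - 1)
      + (μA - μL) * ζ₁ + (μL - δ) = 0)
    (hroot₂ : (1 / 2) * (σA ^ 2 + σL ^ 2 - 2 * ρ * σA * σL) * ζ₂ * (ζ₂ - 1)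
      + (μA - μL) * ζ₂ + (μL - δ) = 0)
    (hζlt : ζ₁ < ζ₂) (hζ₁ : ζ₁ < 0) (hζ₂ : 1 < ζ₂)
    (hγ : 0 < γ) (hκ : 1 < κ) :
    ∃! β : ℝ, γ < β ∧ Psi ζ₁ ζ₂ γ κ β = 0 := by
  have hζ₁0 : ζ₁ ≠ 0 := ne_of_lt hζ₁
  set A : ℝ := κ * (ζ₁ - ζ₂) * γ ^ (1 - ζ₂) with hA
  set B : ℝ := (ζ₂ - 1) * γ ^ (ζ₁ - ζ₂) with hB
  have hBpos : 0 < B := mul_pos (by linarith) (Real.rpow_pos_of_pos hγ _)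
  set g : ℝ → ℝ := fun β => A + B * β ^ (1 - ζ₁) + (1 - ζ₁) * β ^ (1 - ζ₂) with hg
  -- equivalence between Psi roots and g roots on (γ, ∞)
  have hequiv : ∀ x : ℝ, γ < x → (Psi ζ₁ ζ₂ γ κ x = 0 ↔ g x = 0) := by
    intro x hx
    have hx0 : (0 : ℝ) < x := hγ.trans hx
    have e1 : x ^ ζ₁ * x ^ (1 - ζ₁) = x := by
      rw [← Real.rpow_add hx0]
      norm_num
    have e2 : x ^ ζ₁ * x ^ (1 - ζ₂) = x ^ (1 + ζ₁ - ζ₂) := by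
      rw [← Real.rpow_add hx0]
      ring_nf
    have hfac : Psi ζ₁ ζ₂ γ κ x = ζ₁ * (x ^ ζ₁ * g x) := by
      rw [Psi, hg]
      simp only
      rw [hA, hB]
      linear_combination (-ζ₁) * (ζ₂ - 1) * γ ^ (ζ₁ - ζ₂) * e1 + (-ζ₁) * (1 - ζ₁) * e2
    rw [hfac]
    have hxpow : x ^ ζ₁ ≠ 0 := (Real.rpow_pos_of_pos hx0 ζ₁).ne'
    constructor
    · intro h
      rcases mul_eq_zero.1 h with h | h
      · exact absurd h hζ₁0
      · rcases mul_eq_zero.1 h with h | h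
        · exact absurd h hxpow
        · exact h
    · intro h
      rw [h, mul_zero, mul_zero]
  -- continuity of g on Ici γ
  have hrpowc : ∀ c : ℝ, ContinuousOn (fun x : ℝ => x ^ c) (Set.Ici γ) := by
    intro c x hx
    exact (Real.continuousAt_rpow_const x c
      (Or.inl (hγ.trans_le hx).ne')).continuousWithinAt
  have hcont : ContinuousOn g (Set.Ici γ) := by
    apply ContinuousOn.add
    apply ContinuousOn.add continuousOn_const
    · exact continuousOn_const.mul (hrpowc _)
    · exact continuousOn_const.mul (hrpowc _)
  -- strict monotonicity of g on Ici γ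
  have hmono : StrictMonoOn g (Set.Ici γ) := by
    apply strictMonoOn_of_deriv_pos (convex_Ici γ) hcont
    rw [interior_Ici]
    intro x hx
    have hxγ : γ < x := hx
    have hx0 : (0 : ℝ) < x := hγ.trans hxγ
    have h1 : HasDerivAt (fun β : ℝ => β ^ (1 - ζ₁)) ((1 - ζ₁) * x ^ (-ζ₁)) x := by
      have := Real.hasDerivAt_rpow_const (x := x) (p := 1 - ζ₁) (Or.inl hx0.ne')
      convert this using 2
      ring
    have h2 : HasDerivAt (fun β : ℝ => β ^ (1 - ζ₂)) ((1 - ζ₂) * x ^ (-ζ₂)) x := by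
      have := Real.hasDerivAt_rpow_const (x := x) (p := 1 - ζ₂) (Or.inl hx0.ne')
      convert this using 2
      ring
    have hD : HasDerivAt g
        (B * ((1 - ζ₁) * x ^ (-ζ₁)) + (1 - ζ₁) * ((1 - ζ₂) * x ^ (-ζ₂))) x :=
      (((h1.const_mul B).const_add A).add (h2.const_mul (1 - ζ₁)))
    rw [hD.deriv]
    -- key: γ ^ (ζ₁ - ζ₂) * x ^ (-ζ₁) > x ^ (-ζ₂)
    have hkey : x ^ (-ζ₂) < γ ^ (ζ₁ - ζ₂) * x ^ (-ζ₁) := by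
      have h3 : x ^ (ζ₁ - ζ₂) < γ ^ (ζ₁ - ζ₂) :=
        Real.rpow_lt_rpow_of_neg hγ hxγ (by linarith)
      have e3 : x ^ (-ζ₂) = x ^ (ζ₁ - ζ₂) * x ^ (-ζ₁) := by
        rw [← Real.rpow_add hx0]; ring_nf
      rw [e3]
      exact mul_lt_mul_of_pos_right h3 (Real.rpow_pos_of_pos hx0 _)
    have hp1 : 0 < x ^ (-ζ₁) := Real.rpow_pos_of_pos hx0 _
    have hp2 : 0 < x ^ (-ζ₂) := Real.rpow_pos_of_pos hx0 _
    rw [hB]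
    nlinarith [mul_pos (mul_pos (sub_pos.2 hζ₂) (by linarith : (0:ℝ) < 1 - ζ₁))
      (sub_pos.2 hkey)]
  -- g γ < 0
  have hgγ : g γ < 0 := by
    have e4 : γ ^ (ζ₁ - ζ₂) * γ ^ (1 - ζ₁) = γ ^ (1 - ζ₂) := by
      rw [← Real.rpow_add hγ]; ring_nf
    have hgp : 0 < γ ^ (1 - ζ₂) := Real.rpow_pos_of_pos hγ _
    have : g γ = γ ^ (1 - ζ₂) * ((ζ₂ - ζ₁) * (1 - κ)) := by
      rw [hg]; simp only; rw [hA, hB]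
      linear_combination (ζ₂ - 1) * e4
    rw [this]
    have : (ζ₂ - ζ₁) * (1 - κ) < 0 :=
      mul_neg_of_pos_of_neg (by linarith) (by linarith)
    nlinarith
  -- find b > γ with g b > 0
  obtain ⟨b, hbγ, hgb⟩ : ∃ b : ℝ, γ < b ∧ 0 < g b := by
    refine ⟨max (γ + 1) (max 1 (-A / B + 1)), by
      simp only [lt_max_iff]; left; linarith, ?_⟩
    set b := max (γ + 1) (max 1 (-A / B + 1)) with hb
    have hb1 : (1 : ℝ) ≤ b := le_trans (le_max_left 1 _) (le_max_right _ _)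
    have hbA : -A / B + 1 ≤ b := le_trans (le_max_right 1 _) (le_max_right _ _)
    have hb0 : (0 : ℝ) < b := by linarith
    have h5 : b ≤ b ^ (1 - ζ₁) := by
      calc b = b ^ (1 : ℝ) := (Real.rpow_one b).symm
        _ ≤ b ^ (1 - ζ₁) := Real.rpow_le_rpow_of_exponent_le hb1 (by linarith)
    have h6 : 0 < (1 - ζ₁) * b ^ (1 - ζ₂) :=
      mul_pos (by linarith) (Real.rpow_pos_of_pos hb0 _)
    have h7 : -A < B * b := by
      have : -A / B < b := by linarith
      calc -A = B * (-A / B) := by field_simp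
        _ < B * b := by exact mul_lt_mul_of_pos_left this hBpos
    have h8 : B * b ≤ B * b ^ (1 - ζ₁) := mul_le_mul_of_nonneg_left h5 hBpos.le
    rw [hg]; simp only; linarith
  -- IVT
  have hivt := intermediate_value_Ioo hbγ.le
    (hcont.mono (Set.Icc_subset_Ici_self))
  have h0mem : (0 : ℝ) ∈ Set.Ioo (g γ) (g b) := ⟨hgγ, hgb⟩
  obtain ⟨β, hβmem, hβ0⟩ := hivt h0mem
  refine ⟨β, ⟨hβmem.1, (hequiv β hβmem.1).2 hβ0⟩, ?_⟩
  intro y hy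
  have hgy : g y = 0 := (hequiv y hy.1).1 hy.2
  exact hmono.injOn (Set.mem_Ici.2 hy.1.le) (Set.mem_Ici.2 hβmem.1.le)
    (by rw [hgy, hβ0])
end

section
/- The function Ψ satisfies: (i) Ψ(γ) = ζ₁ γ^{1+ζ₁−ζ₂} (κ(ζ₁−ζ₂) + (ζ₂−ζ₁)) = ζ₁(κ−1)(ζ₁−ζ₂)γ^{1+ζ₁−ζ₂} > 0; (ii) Ψ(β) → −∞ as β → ∞; and (iii) Ψ'(β) < 0 for every β ≥ γ, so Ψ is strictly decreasing on [γ,∞). -/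
set_option maxHeartbeats 1000000 in
/-- `Ψ(γ) > 0` (with explicit value), `Ψ(β) → −∞` as `β → ∞`, and
`Ψ` is strictly decreasing on `[γ, ∞)` with `Ψ'(β) < 0` there. -/
theorem stmt_14 (μA μL δ σA σL ρ ζ₁ ζ₂ γ κ : ℝ)
    (hσA : 0 < σA) (hσL : 0 < σL) (hρ₁ : -1 < ρ) (hρ₂ : ρ < 1)
    (hμ : μL < μA) (hδ : μA < δ)
    (hroot₁ : (1 / 2) * (σA ^ 2 + σL ^ 2 - 2 * ρ * σA * σL) * ζ₁ * (ζ₁ - 1)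
      + (μA - μL) * ζ₁ + (μL - δ) = 0)
    (hroot₂ : (1 / 2) * (σA ^ 2 + σL ^ 2 - 2 * ρ * σA * σL) * ζ₂ * (ζ₂ - 1)
      + (μA - μL) * ζ₂ + (μL - δ) = 0)
    (hζlt : ζ₁ < ζ₂) (hζ₁ : ζ₁ < 0) (hζ₂ : 1 < ζ₂)
    (hγ : 0 < γ) (hκ : 1 < κ) :
    Psi ζ₁ ζ₂ γ κ γ = ζ₁ * γ ^ (1 + ζ₁ - ζ₂) * (κ * (ζ₁ - ζ₂) + (ζ₂ - ζ₁)) ∧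
    Psi ζ₁ ζ₂ γ κ γ = ζ₁ * (κ - 1) * (ζ₁ - ζ₂) * γ ^ (1 + ζ₁ - ζ₂) ∧
    0 < Psi ζ₁ ζ₂ γ κ γ ∧
    Filter.Tendsto (Psi ζ₁ ζ₂ γ κ) Filter.atTop Filter.atBot ∧
    (∀ β : ℝ, γ ≤ β → deriv (Psi ζ₁ ζ₂ γ κ) β < 0) ∧
    StrictAntiOn (Psi ζ₁ ζ₂ γ κ) (Set.Ici γ) := by
  have hγne : γ ≠ 0 := hγ.ne'
  -- value at γ
  have e1 : γ ^ (1 - ζ₂) * γ ^ ζ₁ = γ ^ (1 + ζ₁ - ζ₂) := by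
    rw [← Real.rpow_add hγ]; ring_nf
  have e2 : γ ^ (ζ₁ - ζ₂) * γ = γ ^ (1 + ζ₁ - ζ₂) := by
    rw [show (1 + ζ₁ - ζ₂) = (ζ₁ - ζ₂) + 1 by ring, Real.rpow_add_one hγne]
  have eq1 : Psi ζ₁ ζ₂ γ κ γ = ζ₁ * γ ^ (1 + ζ₁ - ζ₂) * (κ * (ζ₁ - ζ₂) + (ζ₂ - ζ₁)) := by
    unfold Psi
    rw [show κ * (ζ₁ - ζ₂) * γ ^ (1 - ζ₂) * γ ^ ζ₁ = κ * (ζ₁ - ζ₂) * (γ ^ (1 - ζ₂) * γ ^ ζ₁)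
        by ring,
      show (ζ₂ - 1) * γ ^ (ζ₁ - ζ₂) * γ = (ζ₂ - 1) * (γ ^ (ζ₁ - ζ₂) * γ) by ring, e1, e2]
    ring
  have eq2 : Psi ζ₁ ζ₂ γ κ γ = ζ₁ * (κ - 1) * (ζ₁ - ζ₂) * γ ^ (1 + ζ₁ - ζ₂) := by
    rw [eq1]; ring
  have hζd : ζ₁ - ζ₂ < 0 := by linarith
  have hcoef : 0 < ζ₁ * (κ - 1) * (ζ₁ - ζ₂) := by
    nlinarith [mul_pos_of_neg_of_neg hζ₁ hζd, mul_pos (show (0:ℝ) < κ - 1 by linarith)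
      (mul_pos_of_neg_of_neg hζ₁ hζd)]
  have hpos : 0 < Psi ζ₁ ζ₂ γ κ γ := by
    rw [eq2]; exact mul_pos hcoef (Real.rpow_pos_of_pos hγ _)
  -- derivative
  have hderiv : ∀ β : ℝ, 0 < β →
      HasDerivAt (Psi ζ₁ ζ₂ γ κ)
        (ζ₁ * (κ * (ζ₁ - ζ₂) * γ ^ (1 - ζ₂) * (ζ₁ * β ^ (ζ₁ - 1))
          + (ζ₂ - 1) * γ ^ (ζ₁ - ζ₂)
          + (1 - ζ₁) * ((1 + ζ₁ - ζ₂) * β ^ (ζ₁ - ζ₂)))) β := by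
    intro β hβ
    have h1 : HasDerivAt (fun x : ℝ => x ^ ζ₁) (ζ₁ * β ^ (ζ₁ - 1)) β :=
      Real.hasDerivAt_rpow_const (Or.inl hβ.ne')
    have h3 : HasDerivAt (fun x : ℝ => x ^ (1 + ζ₁ - ζ₂))
        ((1 + ζ₁ - ζ₂) * β ^ (1 + ζ₁ - ζ₂ - 1)) β :=
      Real.hasDerivAt_rpow_const (Or.inl hβ.ne')
    rw [show (1 + ζ₁ - ζ₂ - 1) = ζ₁ - ζ₂ by ring] at h3
    have h2 : HasDerivAt (fun x : ℝ => (ζ₂ - 1) * γ ^ (ζ₁ - ζ₂) * x)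
        ((ζ₂ - 1) * γ ^ (ζ₁ - ζ₂)) β := by
      simpa using (hasDerivAt_id β).const_mul ((ζ₂ - 1) * γ ^ (ζ₁ - ζ₂))
    exact (((h1.const_mul (κ * (ζ₁ - ζ₂) * γ ^ (1 - ζ₂))).add h2).add
      (h3.const_mul (1 - ζ₁))).const_mul ζ₁
  -- positivity of the inner factor of minus the derivative
  have hg : ∀ β : ℝ, γ ≤ β →
      0 < κ * (ζ₁ - ζ₂) * γ ^ (1 - ζ₂) * (ζ₁ * β ^ (ζ₁ - 1))
        + (ζ₂ - 1) * γ ^ (ζ₁ - ζ₂)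
        + (1 - ζ₁) * ((1 + ζ₁ - ζ₂) * β ^ (ζ₁ - ζ₂)) := by
    intro β hβ
    have hβ0 : 0 < β := lt_of_lt_of_le hγ hβ
    have hsplit : β ^ (ζ₁ - ζ₂) = β ^ (ζ₁ - 1) * β ^ (1 - ζ₂) := by
      rw [← Real.rpow_add hβ0]; ring_nf
    set P : ℝ := κ * ζ₁ * (ζ₁ - ζ₂) * γ ^ (1 - ζ₂) with hP
    set R : ℝ := (1 - ζ₁) * (ζ₂ - 1 - ζ₁) with hR
    set Q : ℝ := (ζ₂ - 1) * γ ^ (ζ₁ - ζ₂) with hQ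
    have hQpos : 0 < Q := mul_pos (by linarith) (Real.rpow_pos_of_pos hγ _)
    have hRpos : 0 < R := mul_pos (by linarith) (by linarith)
    have hrw : κ * (ζ₁ - ζ₂) * γ ^ (1 - ζ₂) * (ζ₁ * β ^ (ζ₁ - 1))
        + (ζ₂ - 1) * γ ^ (ζ₁ - ζ₂)
        + (1 - ζ₁) * ((1 + ζ₁ - ζ₂) * β ^ (ζ₁ - ζ₂))
        = β ^ (ζ₁ - 1) * (P - R * β ^ (1 - ζ₂)) + Q := by
      rw [hsplit, hP, hQ, hR]; ring
    rw [hrw]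
    have hβpow : β ^ (1 - ζ₂) ≤ γ ^ (1 - ζ₂) :=
      Real.rpow_le_rpow_of_nonpos hγ hβ (by linarith)
    have hβpow' : β ^ (ζ₁ - 1) ≤ γ ^ (ζ₁ - 1) :=
      Real.rpow_le_rpow_of_nonpos hγ hβ (by linarith)
    have hβpos1 : 0 < β ^ (ζ₁ - 1) := Real.rpow_pos_of_pos hβ0 _
    have hstep : P - R * γ ^ (1 - ζ₂) ≤ P - R * β ^ (1 - ζ₂) := by
      have := mul_le_mul_of_nonneg_left hβpow hRpos.le
      linarith
    set D : ℝ := P - R * γ ^ (1 - ζ₂) with hD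
    rcases le_or_gt 0 D with hD0 | hD0
    · have : 0 ≤ β ^ (ζ₁ - 1) * (P - R * β ^ (1 - ζ₂)) :=
        mul_nonneg hβpos1.le (le_trans hD0 hstep)
      linarith
    · have h1 : γ ^ (ζ₁ - 1) * D ≤ β ^ (ζ₁ - 1) * D :=
        mul_le_mul_of_nonpos_right hβpow' hD0.le
      have h2 : β ^ (ζ₁ - 1) * D ≤ β ^ (ζ₁ - 1) * (P - R * β ^ (1 - ζ₂)) := by
        have := mul_le_mul_of_nonneg_left hstep hβpos1.le
        linarith
      have hkey : γ ^ (ζ₁ - 1) * D + Q = (κ - 1) * ζ₁ * (ζ₁ - ζ₂) * γ ^ (ζ₁ - ζ₂) := by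
        have e3 : γ ^ (ζ₁ - 1) * γ ^ (1 - ζ₂) = γ ^ (ζ₁ - ζ₂) := by
          rw [← Real.rpow_add hγ]; ring_nf
        rw [hD, hP, hR, hQ, mul_sub,
          show γ ^ (ζ₁ - 1) * ((1 - ζ₁) * (ζ₂ - 1 - ζ₁) * γ ^ (1 - ζ₂))
            = (1 - ζ₁) * (ζ₂ - 1 - ζ₁) * (γ ^ (ζ₁ - 1) * γ ^ (1 - ζ₂)) by ring,
          show γ ^ (ζ₁ - 1) * (κ * ζ₁ * (ζ₁ - ζ₂) * γ ^ (1 - ζ₂))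
            = κ * ζ₁ * (ζ₁ - ζ₂) * (γ ^ (ζ₁ - 1) * γ ^ (1 - ζ₂)) by ring, e3]
        ring
      have hkeypos : 0 < (κ - 1) * ζ₁ * (ζ₁ - ζ₂) * γ ^ (ζ₁ - ζ₂) := by
        have c1 : 0 < (κ - 1) * ζ₁ * (ζ₁ - ζ₂) := by
          rw [show (κ - 1) * ζ₁ * (ζ₁ - ζ₂) = ζ₁ * (κ - 1) * (ζ₁ - ζ₂) by ring]
          exact hcoef
        exact mul_pos c1 (Real.rpow_pos_of_pos hγ _)
      linarith
  -- tendsto atBot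
  have htend : Filter.Tendsto (Psi ζ₁ ζ₂ γ κ) Filter.atTop Filter.atBot := by
    have t1 : Filter.Tendsto (fun β : ℝ => κ * (ζ₁ - ζ₂) * γ ^ (1 - ζ₂) * β ^ ζ₁)
        Filter.atTop (nhds 0) := by
      have h := tendsto_rpow_neg_atTop (y := -ζ₁) (by linarith)
      simp only [neg_neg] at h
      simpa using h.const_mul (κ * (ζ₁ - ζ₂) * γ ^ (1 - ζ₂))
    have t3 : Filter.Tendsto (fun β : ℝ => (1 - ζ₁) * β ^ (1 + ζ₁ - ζ₂))
        Filter.atTop (nhds 0) := by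
      have h := tendsto_rpow_neg_atTop (y := -(1 + ζ₁ - ζ₂)) (by linarith)
      simp only [neg_neg] at h
      simpa using h.const_mul (1 - ζ₁)
    have t2 : Filter.Tendsto (fun β : ℝ => (ζ₂ - 1) * γ ^ (ζ₁ - ζ₂) * β)
        Filter.atTop Filter.atTop :=
      Filter.tendsto_id.const_mul_atTop
        (mul_pos (by linarith) (Real.rpow_pos_of_pos hγ _))
    have tinner : Filter.Tendsto
        (fun β : ℝ => κ * (ζ₁ - ζ₂) * γ ^ (1 - ζ₂) * β ^ ζ₁
          + (ζ₂ - 1) * γ ^ (ζ₁ - ζ₂) * β + (1 - ζ₁) * β ^ (1 + ζ₁ - ζ₂))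
        Filter.atTop Filter.atTop :=
      (t1.add_atTop t2).atTop_add t3
    exact tinner.const_mul_atTop_of_neg hζ₁
  have hder : ∀ β : ℝ, γ ≤ β → deriv (Psi ζ₁ ζ₂ γ κ) β < 0 := by
    intro β hβ
    have hβ0 : 0 < β := lt_of_lt_of_le hγ hβ
    rw [(hderiv β hβ0).deriv]
    exact mul_neg_of_neg_of_pos hζ₁ (hg β hβ)
  refine ⟨eq1, eq2, hpos, htend, hder, ?_⟩
  apply strictAntiOn_of_deriv_neg (convex_Ici γ)
  · exact fun x hx => ((hderiv x (lt_of_lt_of_le hγ hx)).continuousAt).continuousWithinAt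
  · intro x hx
    rw [interior_Ici] at hx
    exact hder x (le_of_lt hx)
end

section
/- Suppose β > γ > 0 and κ = ((ζ₁−1) − (ζ₂−1)(β/γ)^{ζ₂−ζ₁}) / ((ζ₁−ζ₂)(β/γ)^{ζ₂−1}) (the first-order optimality relation for the dividend barrier). Then the two-barrier function is concave in its first argument on the continuation region: for all x₁, x₂ > 0 with γ ≤ x₁/x₂ ≤ β, one has ∂²G/∂x₁² (x₁, x₂; β, γ) ≤ 0. -/
open Real

theorem deriv_deriv_const_mul_rpow_add {x : ℝ} (hx : x ≠ 0) (a b p q : ℝ) :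
    deriv (deriv fun t => a * t ^ p + b * t ^ q) x
      = a * (p * (p - 1)) * x ^ (p - 2) + b * (q * (q - 1)) * x ^ (q - 2) := by
  have hderiv : deriv (fun t => a * t ^ p + b * t ^ q)
      =ᶠ[nhds x] fun t => a * (p * t ^ (p - 1)) + b * (q * t ^ (q - 1)) := by
    filter_upwards [isOpen_ne.mem_nhds hx] with t ht
    exact ((hasDerivAt_rpow_const (Or.inl ht)).const_mul a
      |>.add ((hasDerivAt_rpow_const (Or.inl ht)).const_mul b)).deriv
  have hderiv2 : HasDerivAt (fun t => a * (p * t ^ (p - 1)) + b * (q * t ^ (q - 1)))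
      (a * (p * ((p - 1) * x ^ (p - 1 - 1))) + b * (q * ((q - 1) * x ^ (q - 1 - 1)))) x :=
    ((hasDerivAt_rpow_const (Or.inl hx)).const_mul p |>.const_mul a).add
      ((hasDerivAt_rpow_const (Or.inl hx)).const_mul q |>.const_mul b)
  rw [hderiv.deriv_eq, hderiv2.deriv, sub_sub, sub_sub, one_add_one_eq_two]
  ring

theorem deriv_deriv_G2 {x₁ : ℝ} (hx₁ : x₁ ≠ 0) (ζ₁ ζ₂ β γ κ x₂ : ℝ) :
    deriv (deriv fun t => G2 ζ₁ ζ₂ β γ κ t x₂) x₁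
      = C1 ζ₁ ζ₂ β γ κ * ζ₁ * (ζ₁ - 1) * x₁ ^ (ζ₁ - 2) * x₂ ^ (1 - ζ₁)
        + C2 ζ₁ ζ₂ β γ κ * ζ₂ * (ζ₂ - 1) * x₁ ^ (ζ₂ - 2) * x₂ ^ (1 - ζ₂) := by
  have hG : (fun t => G2 ζ₁ ζ₂ β γ κ t x₂) = fun t =>
      C1 ζ₁ ζ₂ β γ κ * x₂ ^ (1 - ζ₁) * t ^ ζ₁ + C2 ζ₁ ζ₂ β γ κ * x₂ ^ (1 - ζ₂) * t ^ ζ₂ := by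
    funext t
    rw [G2]
    ring
  rw [hG, deriv_deriv_const_mul_rpow_add hx₁]
  ring

theorem C1_eq_of_kappa_eq {ζ₁ ζ₂ β γ κ : ℝ} (hζ₁ : ζ₁ ≠ 0) (hζ : ζ₁ ≠ ζ₂)
    (hβ : 0 < β) (hγ : 0 < γ) (hβγ : β ≠ γ)
    (hκ : κ = ((ζ₁ - 1) - (ζ₂ - 1) * (β / γ) ^ (ζ₂ - ζ₁)) / ((ζ₁ - ζ₂) * (β / γ) ^ (ζ₂ - 1))) :
    C1 ζ₁ ζ₂ β γ κ = (ζ₂ - 1) / (ζ₁ * (ζ₂ - ζ₁)) * β ^ (1 - ζ₁) := by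
  have hr : 0 < β / γ := div_pos hβ hγ
  have hw : (β / γ) ^ (ζ₂ - ζ₁) ≠ 1 := by
    rw [Ne, ← rpow_zero (β / γ), rpow_right_inj hr (div_ne_one_of_ne hβγ)]
    exact sub_ne_zero.2 hζ.symm
  have hκr : κ * (β / γ) ^ (ζ₂ - 1) = ((ζ₁ - 1) - (ζ₂ - 1) * (β / γ) ^ (ζ₂ - ζ₁)) / (ζ₁ - ζ₂) := by
    have hv : (β / γ) ^ (ζ₂ - 1) ≠ 0 := (rpow_pos_of_pos hr (ζ₂ - 1)).ne'
    rw [hκ]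
    field_simp
  have h1 : β ^ (ζ₂ - 1) * γ ^ (1 - ζ₂) = (β / γ) ^ (ζ₂ - 1) := by
    rw [div_rpow hβ.le hγ.le, show 1 - ζ₂ = -(ζ₂ - 1) by ring, rpow_neg hγ.le, div_eq_mul_inv]
  have h2 : γ ^ (ζ₁ - ζ₂) * β ^ (ζ₂ - 1) = β ^ (ζ₁ - 1) * (β / γ) ^ (ζ₂ - ζ₁) := by
    rw [div_rpow hβ.le hγ.le, show ζ₁ - ζ₂ = -(ζ₂ - ζ₁) by ring, rpow_neg hγ.le,
      show ζ₂ - 1 = (ζ₁ - 1) + (ζ₂ - ζ₁) by ring, rpow_add hβ]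
    ring
  have h3 : β ^ (1 - ζ₁) = (β ^ (ζ₁ - 1))⁻¹ := by
    rw [show 1 - ζ₁ = -(ζ₁ - 1) by ring, rpow_neg hβ.le]
  have hβ₁ : β ^ (ζ₁ - 1) ≠ 0 := (rpow_pos_of_pos hβ (ζ₁ - 1)).ne'
  have hw₁ : 1 - (β / γ) ^ (ζ₂ - ζ₁) ≠ 0 := sub_ne_zero.2 hw.symm
  have hζ₁₂ : ζ₁ - ζ₂ ≠ 0 := sub_ne_zero.2 hζ
  have hζ₂₁ : ζ₂ - ζ₁ ≠ 0 := sub_ne_zero.2 hζ.symm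
  rw [C1, mul_assoc, h1, h2, h3, hκr]
  field_simp
  ring

theorem C2_eq_of_kappa_eq {ζ₁ ζ₂ β γ κ : ℝ} (hζ₁ : ζ₁ ≠ 0) (hζ₂ : ζ₂ ≠ 0) (hζ : ζ₁ ≠ ζ₂)
    (hβ : 0 < β) (hγ : 0 < γ) (hβγ : β ≠ γ)
    (hκ : κ = ((ζ₁ - 1) - (ζ₂ - 1) * (β / γ) ^ (ζ₂ - ζ₁)) / ((ζ₁ - ζ₂) * (β / γ) ^ (ζ₂ - 1))) :
    C2 ζ₁ ζ₂ β γ κ = (1 - ζ₁) / (ζ₂ * (ζ₂ - ζ₁)) * β ^ (1 - ζ₂) := by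
  have hκr : κ * (β / γ) ^ (ζ₂ - 1) = ((ζ₁ - 1) - (ζ₂ - 1) * (β / γ) ^ (ζ₂ - ζ₁)) / (ζ₁ - ζ₂) := by
    have hv : (β / γ) ^ (ζ₂ - 1) ≠ 0 := (rpow_pos_of_pos (div_pos hβ hγ) (ζ₂ - 1)).ne'
    rw [hκ]
    field_simp
  have h4 : γ ^ (1 - ζ₂) = (β / γ) ^ (ζ₂ - 1) * β ^ (1 - ζ₂) := by
    rw [div_rpow hβ.le hγ.le, show 1 - ζ₂ = -(ζ₂ - 1) by ring, rpow_neg hγ.le, rpow_neg hβ.le]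
    have hβ₂ : β ^ (ζ₂ - 1) ≠ 0 := (rpow_pos_of_pos hβ (ζ₂ - 1)).ne'
    field_simp
  have h5 : β ^ (1 - ζ₁) * γ ^ (ζ₁ - ζ₂) = (β / γ) ^ (ζ₂ - ζ₁) * β ^ (1 - ζ₂) := by
    rw [div_rpow hβ.le hγ.le, show ζ₁ - ζ₂ = -(ζ₂ - ζ₁) by ring, rpow_neg hγ.le,
      show 1 - ζ₁ = (ζ₂ - ζ₁) + (1 - ζ₂) by ring, rpow_add hβ]
    ring
  have hζ₁₂ : ζ₁ - ζ₂ ≠ 0 := sub_ne_zero.2 hζ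
  have hζ₂₁ : ζ₂ - ζ₁ ≠ 0 := sub_ne_zero.2 hζ.symm
  rw [C2, C1_eq_of_kappa_eq hζ₁ hζ hβ hγ hβγ hκ, h4, ← mul_assoc, hκr]
  field_simp
  linear_combination (ζ₂ - 1) * (ζ₂ - ζ₁) * h5

theorem rpow_one_sub_mul_rpow_sub_two {c x : ℝ} (hc : 0 < c) (hx : 0 < x) (ζ : ℝ) :
    c ^ (1 - ζ) * x ^ (ζ - 2) = (x / c) ^ (ζ - 2) / c := by
  rw [div_rpow hx.le hc.le, show 1 - ζ = -(ζ - 2) - 1 by ring, rpow_sub_one hc.ne',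
    rpow_neg hc.le]
  ring

theorem deriv_deriv_G2_of_kappa_eq {ζ₁ ζ₂ β γ κ x₁ x₂ : ℝ} (hζ₁ : ζ₁ ≠ 0) (hζ₂ : ζ₂ ≠ 0)
    (hζ : ζ₁ ≠ ζ₂) (hβ : 0 < β) (hγ : 0 < γ) (hβγ : β ≠ γ)
    (hκ : κ = ((ζ₁ - 1) - (ζ₂ - 1) * (β / γ) ^ (ζ₂ - ζ₁)) / ((ζ₁ - ζ₂) * (β / γ) ^ (ζ₂ - 1)))
    (hx₁ : 0 < x₁) (hx₂ : 0 < x₂) :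
    deriv (deriv fun t => G2 ζ₁ ζ₂ β γ κ t x₂) x₁
      = (1 - ζ₁) * (ζ₂ - 1) / ((ζ₂ - ζ₁) * (β * x₂))
        * ((x₁ / (β * x₂)) ^ (ζ₂ - 2) - (x₁ / (β * x₂)) ^ (ζ₁ - 2)) := by
  have hscale (ζ : ℝ) : β ^ (1 - ζ) * x₁ ^ (ζ - 2) * x₂ ^ (1 - ζ)
      = (x₁ / (β * x₂)) ^ (ζ - 2) / (β * x₂) := by
    rw [← rpow_one_sub_mul_rpow_sub_two (by positivity) hx₁, mul_rpow hβ.le hx₂.le]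
    ring
  have hζ₂₁ : ζ₂ - ζ₁ ≠ 0 := sub_ne_zero.2 hζ.symm
  rw [deriv_deriv_G2 hx₁.ne', C1_eq_of_kappa_eq hζ₁ hζ hβ hγ hβγ hκ,
    C2_eq_of_kappa_eq hζ₁ hζ₂ hζ hβ hγ hβγ hκ]
  calc _ = (1 - ζ₁) * (ζ₂ - 1) / (ζ₂ - ζ₁)
        * (β ^ (1 - ζ₂) * x₁ ^ (ζ₂ - 2) * x₂ ^ (1 - ζ₂)
          - β ^ (1 - ζ₁) * x₁ ^ (ζ₁ - 2) * x₂ ^ (1 - ζ₁)) := by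
        field_simp
        ring
    _ = _ := by
        rw [hscale, hscale]
        field_simp

theorem stmt_16_general (ζ₁ ζ₂ β γ κ : ℝ)
    (hζlt : ζ₁ < ζ₂) (hζ₁ : ζ₁ < 0) (hζ₂ : 1 < ζ₂)
    (hγ : 0 < γ) (hβγ : γ < β)
    (hκ : κ = ((ζ₁ - 1) - (ζ₂ - 1) * (β / γ) ^ (ζ₂ - ζ₁))
            / ((ζ₁ - ζ₂) * (β / γ) ^ (ζ₂ - 1))) :
    ∀ x₁ x₂ : ℝ, 0 < x₁ → 0 < x₂ → γ ≤ x₁ / x₂ → x₁ / x₂ ≤ β →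
      deriv (deriv (fun t => G2 ζ₁ ζ₂ β γ κ t x₂)) x₁ ≤ 0 := by
  intro x₁ x₂ hx₁ hx₂ _ hle
  have hβ : 0 < β := hγ.trans hβγ
  rw [deriv_deriv_G2_of_kappa_eq hζ₁.ne (by positivity) hζlt.ne hβ hγ hβγ.ne' hκ hx₁ hx₂]
  have hy : x₁ / (β * x₂) ≤ 1 := by
    rw [div_le_one (by positivity)]
    exact (div_le_iff₀ hx₂).1 hle
  have h₁ : 0 < 1 - ζ₁ := by linarith
  have h₂ : 0 < ζ₂ - 1 := by linarith
  have h₁₂ : 0 < ζ₂ - ζ₁ := by linarith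
  refine mul_nonpos_of_nonneg_of_nonpos (by positivity) (sub_nonpos.2 ?_)
  exact rpow_le_rpow_of_exponent_ge (by positivity) hy (by linarith)

/-- under the first-order optimality relation for `κ`, the
two-barrier value function is concave in its first argument on the
continuation region `γ ≤ x₁/x₂ ≤ β`. -/
theorem stmt_16 (μA μL δ σA σL ρ ζ₁ ζ₂ β γ κ : ℝ)
    (hσA : 0 < σA) (hσL : 0 < σL) (hρ₁ : -1 < ρ) (hρ₂ : ρ < 1)
    (hμ : μL < μA) (hδ : μA < δ)
    (hroot₁ : (1 / 2) * (σA ^ 2 + σL ^ 2 - 2 * ρ * σA * σL) * ζ₁ * (ζ₁ - 1)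
      + (μA - μL) * ζ₁ + (μL - δ) = 0)
    (hroot₂ : (1 / 2) * (σA ^ 2 + σL ^ 2 - 2 * ρ * σA * σL) * ζ₂ * (ζ₂ - 1)
      + (μA - μL) * ζ₂ + (μL - δ) = 0)
    (hζlt : ζ₁ < ζ₂) (hζ₁ : ζ₁ < 0) (hζ₂ : 1 < ζ₂)
    (hγ : 0 < γ) (hβγ : γ < β) (hκ1 : 1 < κ)
    (hκ : κ = ((ζ₁ - 1) - (ζ₂ - 1) * (β / γ) ^ (ζ₂ - ζ₁))
            / ((ζ₁ - ζ₂) * (β / γ) ^ (ζ₂ - 1))) :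
    ∀ x₁ x₂ : ℝ, 0 < x₁ → 0 < x₂ → γ ≤ x₁ / x₂ → x₁ / x₂ ≤ β →
      deriv (deriv (fun t => G2 ζ₁ ζ₂ β γ κ t x₂)) x₁ ≤ 0 :=
  stmt_16_general ζ₁ ζ₂ β γ κ hζlt hζ₁ hζ₂ hγ hβγ hκ
end

section
/- Suppose β > γ > 0 and κ = ((ζ₁−1) − (ζ₂−1)(β/γ)^{ζ₂−ζ₁}) / ((ζ₁−ζ₂)(β/γ)^{ζ₂−1}). Then for all x₁, x₂ > 0 with γ ≤ x₁/x₂ ≤ β, the marginal value of assets is bounded between one and the cost of capital: 1 ≤ ∂G/∂x₁ (x₁, x₂; β, γ) ≤ κ. -/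
/-!
Under the relation defining `κ`, the constants satisfy `C₁ ζ₁ β^(ζ₁-1) = (ζ₂-1)/(ζ₂-ζ₁)` and
`C₂ ζ₂ β^(ζ₂-1) = (1-ζ₁)/(ζ₂-ζ₁)`, so `∂G/∂x₁ = φ (x₁ / (β x₂))` with `φ = marginalProfile ζ₁ ζ₂`
and `x₁ / (β x₂) ∈ [γ/β, 1]`. Since `ζ₁ < 1 < ζ₂`, `φ` is decreasing on `(0, 1]`, and `φ 1 = 1`,
`φ (γ/β) = κ`.
-/

open Real Set

/-- `∂G/∂x₁` at `x₁ / x₂ = β s`, once `κ` satisfies the optimality relation. -/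
noncomputable def marginalProfile (ζ₁ ζ₂ s : ℝ) : ℝ :=
  (ζ₂ - 1) / (ζ₂ - ζ₁) * s ^ (ζ₁ - 1) + (1 - ζ₁) / (ζ₂ - ζ₁) * s ^ (ζ₂ - 1)

section MarginalProfile

variable {ζ₁ ζ₂ : ℝ}

lemma marginalProfile_one (h : ζ₁ ≠ ζ₂) : marginalProfile ζ₁ ζ₂ 1 = 1 := by
  have : ζ₂ - ζ₁ ≠ 0 := sub_ne_zero.2 h.symm
  rw [marginalProfile, one_rpow, one_rpow]
  field_simp
  ring

lemma marginalProfile_inv (h : ζ₁ ≠ ζ₂) {r : ℝ} (hr : 0 < r) :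
    marginalProfile ζ₁ ζ₂ r⁻¹
      = ((ζ₁ - 1) - (ζ₂ - 1) * r ^ (ζ₂ - ζ₁)) / ((ζ₁ - ζ₂) * r ^ (ζ₂ - 1)) := by
  have h₁₂ : ζ₁ - ζ₂ ≠ 0 := sub_ne_zero.2 h
  have h₂₁ : ζ₂ - ζ₁ ≠ 0 := sub_ne_zero.2 h.symm
  rw [marginalProfile]
  simp only [inv_rpow hr.le, rpow_sub hr, rpow_one]
  field_simp
  ring

lemma hasDerivAt_marginalProfile {s : ℝ} (hs : s ≠ 0) :
    HasDerivAt (marginalProfile ζ₁ ζ₂)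
      ((ζ₂ - 1) * (ζ₁ - 1) / (ζ₂ - ζ₁) * (s ^ (ζ₁ - 2) - s ^ (ζ₂ - 2))) s := by
  have h := (((hasDerivAt_rpow_const (p := ζ₁ - 1) (Or.inl hs)).const_mul
    ((ζ₂ - 1) / (ζ₂ - ζ₁))).add
      ((hasDerivAt_rpow_const (p := ζ₂ - 1) (Or.inl hs)).const_mul ((1 - ζ₁) / (ζ₂ - ζ₁))))
  refine h.congr_deriv ?_
  rw [show ζ₁ - 1 - 1 = ζ₁ - 2 by ring, show ζ₂ - 1 - 1 = ζ₂ - 2 by ring]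
  ring

lemma antitoneOn_marginalProfile (hζ₁ : ζ₁ ≤ 1) (hζ₂ : 1 ≤ ζ₂) :
    AntitoneOn (marginalProfile ζ₁ ζ₂) (Ioc 0 1) := by
  have hderiv : ∀ s ∈ Ioc (0 : ℝ) 1, HasDerivAt (marginalProfile ζ₁ ζ₂)
      ((ζ₂ - 1) * (ζ₁ - 1) / (ζ₂ - ζ₁) * (s ^ (ζ₁ - 2) - s ^ (ζ₂ - 2))) s :=
    fun s hs => hasDerivAt_marginalProfile hs.1.ne'
  refine antitoneOn_of_deriv_nonpos (convex_Ioc (0 : ℝ) 1)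
    (fun s hs => (hderiv s hs).continuousAt.continuousWithinAt) ?_ ?_ <;> rw [interior_Ioc]
  · exact fun s hs => (hderiv s (Ioo_subset_Ioc_self hs)).differentiableAt.differentiableWithinAt
  intro s hs
  rw [(hderiv s (Ioo_subset_Ioc_self hs)).deriv]
  refine mul_nonpos_of_nonpos_of_nonneg
    (div_nonpos_of_nonpos_of_nonneg (mul_nonpos_of_nonneg_of_nonpos (by linarith) (by linarith))
      (by linarith)) (sub_nonneg.2 ?_)
  exact rpow_le_rpow_of_exponent_ge hs.1 hs.2.le (by linarith)

end MarginalProfile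

section Constants

variable {ζ₁ ζ₂ β γ κ : ℝ}

lemma C1_mul_rpow (hζ₁ : ζ₁ ≠ 0) (hζ : ζ₁ < ζ₂) (hγ : 0 < γ) (hβγ : γ < β)
    (hκ : κ = ((ζ₁ - 1) - (ζ₂ - 1) * (β / γ) ^ (ζ₂ - ζ₁))
            / ((ζ₁ - ζ₂) * (β / γ) ^ (ζ₂ - 1))) :
    C1 ζ₁ ζ₂ β γ κ * ζ₁ * β ^ (ζ₁ - 1) = (ζ₂ - 1) / (ζ₂ - ζ₁) := by
  have hβ : 0 < β := hγ.trans hβγ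
  have hq : γ ^ (ζ₂ - ζ₁) < β ^ (ζ₂ - ζ₁) := rpow_lt_rpow hγ.le hβγ (by linarith)
  have hne : β ^ ζ₁ * γ ^ ζ₂ - β ^ ζ₂ * γ ^ ζ₁ ≠ 0 := by
    rw [rpow_sub hβ, rpow_sub hγ, div_lt_div_iff₀ (by positivity) (by positivity)] at hq
    linarith
  have h₁₂ : ζ₁ - ζ₂ ≠ 0 := by linarith
  have h₂₁ : ζ₂ - ζ₁ ≠ 0 := by linarith
  rw [C1, hκ]
  simp only [div_rpow hβ.le hγ.le, rpow_sub hβ, rpow_sub hγ, rpow_one]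
  field_simp
  ring

lemma C2_mul_rpow (hζ₁ : ζ₁ ≠ 0) (hζ₂ : ζ₂ ≠ 0) (hζ : ζ₁ < ζ₂) (hγ : 0 < γ) (hβγ : γ < β)
    (hκ : κ = ((ζ₁ - 1) - (ζ₂ - 1) * (β / γ) ^ (ζ₂ - ζ₁))
            / ((ζ₁ - ζ₂) * (β / γ) ^ (ζ₂ - 1))) :
    C2 ζ₁ ζ₂ β γ κ * ζ₂ * β ^ (ζ₂ - 1) = (1 - ζ₁) / (ζ₂ - ζ₁) := by
  have hβ : 0 < β := hγ.trans hβγ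
  have h₁₂ : ζ₁ - ζ₂ ≠ 0 := by linarith
  have h₂₁ : ζ₂ - ζ₁ ≠ 0 := by linarith
  have hC1 : C1 ζ₁ ζ₂ β γ κ * ζ₁ = (ζ₂ - 1) / (ζ₂ - ζ₁) / β ^ (ζ₁ - 1) :=
    eq_div_of_mul_eq (by positivity) (C1_mul_rpow hζ₁ hζ hγ hβγ hκ)
  rw [C2, div_mul_cancel₀ _ hζ₂, hC1, hκ]
  simp only [div_rpow hβ.le hγ.le, rpow_sub hβ, rpow_sub hγ, rpow_one]
  field_simp
  ring

end Constants

lemma hasDerivAt_G2 (ζ₁ ζ₂ β γ κ : ℝ) {x₁ x₂ : ℝ} (hx₁ : 0 < x₁) (hx₂ : 0 < x₂) :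
    HasDerivAt (fun t => G2 ζ₁ ζ₂ β γ κ t x₂)
      (C1 ζ₁ ζ₂ β γ κ * ζ₁ * (x₁ / x₂) ^ (ζ₁ - 1)
        + C2 ζ₁ ζ₂ β γ κ * ζ₂ * (x₁ / x₂) ^ (ζ₂ - 1)) x₁ := by
  have h₁ := ((hasDerivAt_rpow_const (p := ζ₁) (Or.inl hx₁.ne')).const_mul
    (C1 ζ₁ ζ₂ β γ κ)).mul_const (x₂ ^ (1 - ζ₁))
  have h₂ := ((hasDerivAt_rpow_const (p := ζ₂) (Or.inl hx₁.ne')).const_mul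
    (C2 ζ₁ ζ₂ β γ κ)).mul_const (x₂ ^ (1 - ζ₂))
  refine (h₁.add h₂).congr_deriv ?_
  simp only [div_rpow hx₁.le hx₂.le, rpow_sub hx₁, rpow_sub hx₂, rpow_one]
  field_simp

theorem stmt_17_general (ζ₁ ζ₂ β γ κ : ℝ)
    (hζ₁ : ζ₁ < 0) (hζ₂ : 1 < ζ₂)
    (hγ : 0 < γ) (hβγ : γ < β)
    (hκ : κ = ((ζ₁ - 1) - (ζ₂ - 1) * (β / γ) ^ (ζ₂ - ζ₁))
            / ((ζ₁ - ζ₂) * (β / γ) ^ (ζ₂ - 1))) :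
    ∀ x₁ x₂ : ℝ, 0 < x₁ → 0 < x₂ → γ ≤ x₁ / x₂ → x₁ / x₂ ≤ β →
      1 ≤ deriv (fun t => G2 ζ₁ ζ₂ β γ κ t x₂) x₁ ∧
      deriv (fun t => G2 ζ₁ ζ₂ β γ κ t x₂) x₁ ≤ κ := by
  intro x₁ x₂ hx₁ hx₂ hlo hhi
  have hβ : 0 < β := hγ.trans hβγ
  have hζ : ζ₁ < ζ₂ := by linarith
  have hderiv :
      deriv (fun t => G2 ζ₁ ζ₂ β γ κ t x₂) x₁ = marginalProfile ζ₁ ζ₂ (x₁ / x₂ / β) := by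
    rw [(hasDerivAt_G2 ζ₁ ζ₂ β γ κ hx₁ hx₂).deriv, marginalProfile,
      ← C1_mul_rpow hζ₁.ne hζ hγ hβγ hκ, ← C2_mul_rpow hζ₁.ne (by linarith) hζ hγ hβγ hκ,
      div_rpow (div_pos hx₁ hx₂).le hβ.le, div_rpow (div_pos hx₁ hx₂).le hβ.le]
    field_simp
  have hanti := antitoneOn_marginalProfile (hζ₁.le.trans zero_le_one) hζ₂.le
  have hs : x₁ / x₂ / β ∈ Ioc 0 1 := ⟨by positivity, (div_le_one hβ).2 hhi⟩
  have hγβ : γ / β ∈ Ioc 0 1 := ⟨by positivity, (div_le_one hβ).2 hβγ.le⟩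
  have hγs : γ / β ≤ x₁ / x₂ / β := div_le_div_of_nonneg_right hlo hβ.le
  rw [hderiv]
  constructor
  · calc 1 = marginalProfile ζ₁ ζ₂ 1 := (marginalProfile_one hζ.ne).symm
      _ ≤ _ := hanti hs ⟨one_pos, le_rfl⟩ hs.2
  · calc marginalProfile ζ₁ ζ₂ (x₁ / x₂ / β)
          ≤ marginalProfile ζ₁ ζ₂ (γ / β) := hanti hγβ hs hγs
      _ = κ := by rw [← inv_div, marginalProfile_inv hζ.ne (div_pos hβ hγ), hκ]

/-- under the first-order optimality relation for `κ`, the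
marginal value of assets is bounded between 1 and `κ` on the continuation
region `γ ≤ x₁/x₂ ≤ β`. -/
theorem stmt_17 (μA μL δ σA σL ρ ζ₁ ζ₂ β γ κ : ℝ)
    (hσA : 0 < σA) (hσL : 0 < σL) (hρ₁ : -1 < ρ) (hρ₂ : ρ < 1)
    (hμ : μL < μA) (hδ : μA < δ)
    (hroot₁ : (1 / 2) * (σA ^ 2 + σL ^ 2 - 2 * ρ * σA * σL) * ζ₁ * (ζ₁ - 1)
      + (μA - μL) * ζ₁ + (μL - δ) = 0)
    (hroot₂ : (1 / 2) * (σA ^ 2 + σL ^ 2 - 2 * ρ * σA * σL) * ζ₂ * (ζ₂ - 1)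
      + (μA - μL) * ζ₂ + (μL - δ) = 0)
    (hζlt : ζ₁ < ζ₂) (hζ₁ : ζ₁ < 0) (hζ₂ : 1 < ζ₂)
    (hγ : 0 < γ) (hβγ : γ < β) (hκ1 : 1 < κ)
    (hκ : κ = ((ζ₁ - 1) - (ζ₂ - 1) * (β / γ) ^ (ζ₂ - ζ₁))
            / ((ζ₁ - ζ₂) * (β / γ) ^ (ζ₂ - 1))) :
    ∀ x₁ x₂ : ℝ, 0 < x₁ → 0 < x₂ → γ ≤ x₁ / x₂ → x₁ / x₂ ≤ β →
      1 ≤ deriv (fun t => G2 ζ₁ ζ₂ β γ κ t x₂) x₁ ∧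
      deriv (fun t => G2 ζ₁ ζ₂ β γ κ t x₂) x₁ ≤ κ :=
  stmt_17_general ζ₁ ζ₂ β γ κ hζ₁ hζ₂ hγ hβγ hκ
end

section
/- Suppose β > γ > 0 and κ = ((ζ₁−1) − (ζ₂−1)(β/γ)^{ζ₂−ζ₁}) / ((ζ₁−ζ₂)(β/γ)^{ζ₂−1}). Then the smooth-fit condition holds at the dividend barrier: ∂²G/∂x₁² (βx₂, x₂; β, γ) = 0 for every x₂ > 0, and consequently ∂²G/∂x₂² (βx₂, x₂; β, γ) = β² · ∂²G/∂x₁² (βx₂, x₂; β, γ) = 0 and ∂²G/∂x₁∂x₂ (βx₂, x₂; β, γ) = β · ∂²G/∂x₁² (βx₂, x₂; β, γ) = 0. -/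
lemma deriv_two_pow (a b p q x : ℝ) (hx : x ≠ 0) :
    deriv (fun t : ℝ => a * t ^ p + b * t ^ q) x
      = a * p * x ^ (p - 1) + b * q * x ^ (q - 1) := by
  have h1 : HasDerivAt (fun t : ℝ => a * t ^ p + b * t ^ q)
      (a * (p * x ^ (p - 1)) + b * (q * x ^ (q - 1))) x :=
    ((Real.hasDerivAt_rpow_const (Or.inl hx)).const_mul a).add
      ((Real.hasDerivAt_rpow_const (Or.inl hx)).const_mul b)
  rw [h1.deriv]; ring

lemma deriv_deriv_two_pow (a b p q x : ℝ) (hx : 0 < x) :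
    deriv (deriv (fun t : ℝ => a * t ^ p + b * t ^ q)) x
      = a * p * (p - 1) * x ^ (p - 2) + b * q * (q - 1) * x ^ (q - 2) := by
  have hev : deriv (fun t : ℝ => a * t ^ p + b * t ^ q)
      =ᶠ[nhds x] fun y => a * p * y ^ (p - 1) + b * q * y ^ (q - 1) :=
    (eventually_ne_nhds hx.ne').mono fun y hy => deriv_two_pow a b p q y hy
  rw [hev.deriv_eq, deriv_two_pow _ _ _ _ _ hx.ne',
    show p - 1 - 1 = p - 2 from by ring, show q - 1 - 1 = q - 2 from by ring]

lemma key_smoothfit (ζ₁ ζ₂ β γ κ : ℝ)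
    (hζlt : ζ₁ < ζ₂) (hζ₁ : ζ₁ < 0) (hζ₂ : 1 < ζ₂)
    (hγ : 0 < γ) (hβγ : γ < β)
    (hκ : κ = ((ζ₁ - 1) - (ζ₂ - 1) * (β / γ) ^ (ζ₂ - ζ₁))
            / ((ζ₁ - ζ₂) * (β / γ) ^ (ζ₂ - 1))) :
    C1 ζ₁ ζ₂ β γ κ * ζ₁ * (ζ₁ - 1) * β ^ (ζ₁ - 2)
      + C2 ζ₁ ζ₂ β γ κ * ζ₂ * (ζ₂ - 1) * β ^ (ζ₂ - 2) = 0 := by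
  have hβ : 0 < β := hγ.trans hβγ
  have e1 : (β / γ) ^ (ζ₂ - 1) = β ^ (ζ₂ - 1) * γ ^ (1 - ζ₂) := by
    rw [Real.div_rpow hβ.le hγ.le, show (1:ℝ) - ζ₂ = -(ζ₂ - 1) by ring,
      Real.rpow_neg hγ.le, div_eq_mul_inv]
  have e2 : (β / γ) ^ (ζ₂ - ζ₁) = β ^ (ζ₂ - ζ₁) * γ ^ (ζ₁ - ζ₂) := by
    rw [Real.div_rpow hβ.le hγ.le, show ζ₁ - ζ₂ = -(ζ₂ - ζ₁) by ring,
      Real.rpow_neg hγ.le, div_eq_mul_inv]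
  have e3 : β ^ (ζ₂ - ζ₁) * β ^ (ζ₁ - 1) = β ^ (ζ₂ - 1) := by
    rw [← Real.rpow_add hβ, show ζ₂ - ζ₁ + (ζ₁ - 1) = ζ₂ - 1 by ring]
  have e4 : β ^ (ζ₁ - 2) * β = β ^ (ζ₁ - 1) := by
    rw [← Real.rpow_add_one hβ.ne', show ζ₁ - 2 + 1 = ζ₁ - 1 by ring]
  have e5 : β ^ (ζ₂ - 2) * β = β ^ (ζ₂ - 1) := by
    rw [← Real.rpow_add_one hβ.ne', show ζ₂ - 2 + 1 = ζ₂ - 1 by ring]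
  have hPRQ : β ^ (ζ₁ - 1) < γ ^ (ζ₁ - ζ₂) * β ^ (ζ₂ - 1) := by
    have h1 : β ^ (ζ₁ - ζ₂) < γ ^ (ζ₁ - ζ₂) :=
      Real.rpow_lt_rpow_of_neg hγ hβγ (by linarith)
    have h2 : β ^ (ζ₁ - ζ₂) * β ^ (ζ₂ - 1) = β ^ (ζ₁ - 1) := by
      rw [← Real.rpow_add hβ, show ζ₁ - ζ₂ + (ζ₂ - 1) = ζ₁ - 1 by ring]
    have h3 : (0:ℝ) < β ^ (ζ₂ - 1) := Real.rpow_pos_of_pos hβ _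
    nlinarith
  have hMne : β ^ (ζ₁ - 1) - γ ^ (ζ₁ - ζ₂) * β ^ (ζ₂ - 1) ≠ 0 := by linarith
  have hζ₁ne : ζ₁ ≠ 0 := hζ₁.ne
  have hζ₂ne : ζ₂ ≠ 0 := by positivity
  have hζdne : ζ₁ - ζ₂ ≠ 0 := by linarith
  have hQSpos : (0:ℝ) < (β / γ) ^ (ζ₂ - 1) := Real.rpow_pos_of_pos (by positivity) _
  have hC1 : C1 ζ₁ ζ₂ β γ κ * (ζ₁ * (β ^ (ζ₁ - 1) - γ ^ (ζ₁ - ζ₂) * β ^ (ζ₂ - 1)))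
      = 1 - κ * β ^ (ζ₂ - 1) * γ ^ (1 - ζ₂) :=
    div_mul_cancel₀ _ (mul_ne_zero hζ₁ne hMne)
  have hC2 : C2 ζ₁ ζ₂ β γ κ * ζ₂
      = κ * γ ^ (1 - ζ₂) - C1 ζ₁ ζ₂ β γ κ * ζ₁ * γ ^ (ζ₁ - ζ₂) :=
    div_mul_cancel₀ _ hζ₂ne
  have hκD : κ * ((ζ₁ - ζ₂) * (β / γ) ^ (ζ₂ - 1))
      = (ζ₁ - 1) - (ζ₂ - 1) * (β / γ) ^ (ζ₂ - ζ₁) := by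
    rw [hκ, div_mul_cancel₀ _ (mul_ne_zero hζdne hQSpos.ne')]
  rw [e1, e2] at hκD
  have hne : β * ((β ^ (ζ₁ - 1) - γ ^ (ζ₁ - ζ₂) * β ^ (ζ₂ - 1)) * β ^ (ζ₁ - 1)) ≠ 0 :=
    mul_ne_zero hβ.ne' (mul_ne_zero hMne (Real.rpow_pos_of_pos hβ _).ne')
  have h : (C1 ζ₁ ζ₂ β γ κ * ζ₁ * (ζ₁ - 1) * β ^ (ζ₁ - 2)
      + C2 ζ₁ ζ₂ β γ κ * ζ₂ * (ζ₂ - 1) * β ^ (ζ₂ - 2))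
      * (β * ((β ^ (ζ₁ - 1) - γ ^ (ζ₁ - ζ₂) * β ^ (ζ₂ - 1)) * β ^ (ζ₁ - 1))) = 0 := by
    linear_combination
      (C1 ζ₁ ζ₂ β γ κ * ζ₁ * (ζ₁ - 1) *
        (β ^ (ζ₁ - 1) - γ ^ (ζ₁ - ζ₂) * β ^ (ζ₂ - 1)) * β ^ (ζ₁ - 1)) * e4
      + (C2 ζ₁ ζ₂ β γ κ * ζ₂ * (ζ₂ - 1) *
        (β ^ (ζ₁ - 1) - γ ^ (ζ₁ - ζ₂) * β ^ (ζ₂ - 1)) * β ^ (ζ₁ - 1)) * e5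
      + ((ζ₂ - 1) * β ^ (ζ₂ - 1) * β ^ (ζ₁ - 1) *
        (β ^ (ζ₁ - 1) - γ ^ (ζ₁ - ζ₂) * β ^ (ζ₂ - 1))) * hC2
      + ((ζ₁ - 1) * (β ^ (ζ₁ - 1) * β ^ (ζ₁ - 1))
         - γ ^ (ζ₁ - ζ₂) * (ζ₂ - 1) * β ^ (ζ₂ - 1) * β ^ (ζ₁ - 1)) * hC1
      - (β ^ (ζ₁ - 1) * β ^ (ζ₁ - 1)) * hκD
      + ((ζ₂ - 1) * γ ^ (ζ₁ - ζ₂) * β ^ (ζ₁ - 1)) * e3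
  exact (mul_eq_zero.mp h).resolve_right hne

/-- under the first-order optimality relation for `κ`, the
smooth-fit condition holds at the dividend barrier: the second partial
derivatives of `G` vanish at `(βx₂, x₂)`. -/
theorem stmt_18 (μA μL δ σA σL ρ ζ₁ ζ₂ β γ κ : ℝ)
    (hσA : 0 < σA) (hσL : 0 < σL) (hρ₁ : -1 < ρ) (hρ₂ : ρ < 1)
    (hμ : μL < μA) (hδ : μA < δ)
    (hroot₁ : (1 / 2) * (σA ^ 2 + σL ^ 2 - 2 * ρ * σA * σL) * ζ₁ * (ζ₁ - 1)
      + (μA - μL) * ζ₁ + (μL - δ) = 0)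
    (hroot₂ : (1 / 2) * (σA ^ 2 + σL ^ 2 - 2 * ρ * σA * σL) * ζ₂ * (ζ₂ - 1)
      + (μA - μL) * ζ₂ + (μL - δ) = 0)
    (hζlt : ζ₁ < ζ₂) (hζ₁ : ζ₁ < 0) (hζ₂ : 1 < ζ₂)
    (hγ : 0 < γ) (hβγ : γ < β) (hκ1 : 1 < κ)
    (hκ : κ = ((ζ₁ - 1) - (ζ₂ - 1) * (β / γ) ^ (ζ₂ - ζ₁))
            / ((ζ₁ - ζ₂) * (β / γ) ^ (ζ₂ - 1))) :
    ∀ x₂ : ℝ, 0 < x₂ →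
      deriv (deriv (fun t => G2 ζ₁ ζ₂ β γ κ t x₂)) (β * x₂) = 0 ∧
      deriv (deriv (fun t => G2 ζ₁ ζ₂ β γ κ (β * x₂) t)) x₂
        = β ^ 2 * deriv (deriv (fun t => G2 ζ₁ ζ₂ β γ κ t x₂)) (β * x₂) ∧
      deriv (deriv (fun t => G2 ζ₁ ζ₂ β γ κ (β * x₂) t)) x₂ = 0 ∧
      deriv (fun u => deriv (fun t => G2 ζ₁ ζ₂ β γ κ t u) (β * x₂)) x₂
        = β * deriv (deriv (fun t => G2 ζ₁ ζ₂ β γ κ t x₂)) (β * x₂) ∧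
      deriv (fun u => deriv (fun t => G2 ζ₁ ζ₂ β γ κ t u) (β * x₂)) x₂ = 0 := by
  intro x₂ hx
  have hβ : 0 < β := hγ.trans hβγ
  have hbx : 0 < β * x₂ := mul_pos hβ hx
  have key := key_smoothfit ζ₁ ζ₂ β γ κ hζlt hζ₁ hζ₂ hγ hβγ hκ
  set c₁ := C1 ζ₁ ζ₂ β γ κ with hc₁
  set c₂ := C2 ζ₁ ζ₂ β γ κ with hc₂
  -- ∂²/∂x₁²
  have hD11 : deriv (deriv (fun t => G2 ζ₁ ζ₂ β γ κ t x₂)) (β * x₂) = 0 := by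
    have hfx : (fun t => G2 ζ₁ ζ₂ β γ κ t x₂)
        = fun t => (c₁ * x₂ ^ (1 - ζ₁)) * t ^ ζ₁ + (c₂ * x₂ ^ (1 - ζ₂)) * t ^ ζ₂ := by
      funext t; simp only [G2, ← hc₁, ← hc₂]; ring
    rw [hfx, deriv_deriv_two_pow _ _ _ _ _ hbx,
      Real.mul_rpow hβ.le hx.le, Real.mul_rpow hβ.le hx.le]
    have hx1 : x₂ ^ (1 - ζ₁) * x₂ ^ (ζ₁ - 2) = x₂ ^ (-1 : ℝ) := by
      rw [← Real.rpow_add hx, show 1 - ζ₁ + (ζ₁ - 2) = (-1 : ℝ) by ring]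
    have hx2 : x₂ ^ (1 - ζ₂) * x₂ ^ (ζ₂ - 2) = x₂ ^ (-1 : ℝ) := by
      rw [← Real.rpow_add hx, show 1 - ζ₂ + (ζ₂ - 2) = (-1 : ℝ) by ring]
    linear_combination (x₂ ^ (-1 : ℝ)) * key
      + (c₁ * ζ₁ * (ζ₁ - 1) * β ^ (ζ₁ - 2)) * hx1
      + (c₂ * ζ₂ * (ζ₂ - 1) * β ^ (ζ₂ - 2)) * hx2
  -- ∂²/∂x₂²
  have hD22 : deriv (deriv (fun t => G2 ζ₁ ζ₂ β γ κ (β * x₂) t)) x₂ = 0 := by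
    have hfy : (fun t => G2 ζ₁ ζ₂ β γ κ (β * x₂) t)
        = fun t => (c₁ * (β * x₂) ^ ζ₁) * t ^ (1 - ζ₁)
            + (c₂ * (β * x₂) ^ ζ₂) * t ^ (1 - ζ₂) := by
      funext t; simp only [G2, ← hc₁, ← hc₂]
    rw [hfy, deriv_deriv_two_pow _ _ _ _ _ hx,
      Real.mul_rpow hβ.le hx.le, Real.mul_rpow hβ.le hx.le]
    have g1 : x₂ ^ ζ₁ * x₂ ^ (1 - ζ₁ - 2) = x₂ ^ (-1 : ℝ) := by
      rw [← Real.rpow_add hx, show ζ₁ + (1 - ζ₁ - 2) = (-1 : ℝ) by ring]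
    have g2 : x₂ ^ ζ₂ * x₂ ^ (1 - ζ₂ - 2) = x₂ ^ (-1 : ℝ) := by
      rw [← Real.rpow_add hx, show ζ₂ + (1 - ζ₂ - 2) = (-1 : ℝ) by ring]
    have b1 : β ^ (ζ₁ - 2) * β ^ (2 : ℝ) = β ^ ζ₁ := by
      rw [← Real.rpow_add hβ, show ζ₁ - 2 + 2 = ζ₁ by ring]
    have b2 : β ^ (ζ₂ - 2) * β ^ (2 : ℝ) = β ^ ζ₂ := by
      rw [← Real.rpow_add hβ, show ζ₂ - 2 + 2 = ζ₂ by ring]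
    linear_combination (β ^ (2 : ℝ) * x₂ ^ (-1 : ℝ)) * key
      + (c₁ * ζ₁ * (ζ₁ - 1) * β ^ ζ₁) * g1
      + (c₂ * ζ₂ * (ζ₂ - 1) * β ^ ζ₂) * g2
      - (c₁ * ζ₁ * (ζ₁ - 1) * x₂ ^ (-1 : ℝ)) * b1
      - (c₂ * ζ₂ * (ζ₂ - 1) * x₂ ^ (-1 : ℝ)) * b2
  -- mixed
  have hD12 : deriv (fun u => deriv (fun t => G2 ζ₁ ζ₂ β γ κ t u) (β * x₂)) x₂ = 0 := by
    have hfu : (fun u => deriv (fun t => G2 ζ₁ ζ₂ β γ κ t u) (β * x₂))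
        = fun u => (c₁ * ζ₁ * (β * x₂) ^ (ζ₁ - 1)) * u ^ (1 - ζ₁)
            + (c₂ * ζ₂ * (β * x₂) ^ (ζ₂ - 1)) * u ^ (1 - ζ₂) := by
      funext u
      have hinner : (fun t => G2 ζ₁ ζ₂ β γ κ t u)
          = fun t => (c₁ * u ^ (1 - ζ₁)) * t ^ ζ₁ + (c₂ * u ^ (1 - ζ₂)) * t ^ ζ₂ := by
        funext t; simp only [G2, ← hc₁, ← hc₂]; ring
      rw [hinner, deriv_two_pow _ _ _ _ _ hbx.ne']; ring
    rw [hfu, deriv_two_pow _ _ _ _ _ hx.ne',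
      Real.mul_rpow hβ.le hx.le, Real.mul_rpow hβ.le hx.le]
    have m1 : x₂ ^ (ζ₁ - 1) * x₂ ^ (1 - ζ₁ - 1) = x₂ ^ (-1 : ℝ) := by
      rw [← Real.rpow_add hx, show ζ₁ - 1 + (1 - ζ₁ - 1) = (-1 : ℝ) by ring]
    have m2 : x₂ ^ (ζ₂ - 1) * x₂ ^ (1 - ζ₂ - 1) = x₂ ^ (-1 : ℝ) := by
      rw [← Real.rpow_add hx, show ζ₂ - 1 + (1 - ζ₂ - 1) = (-1 : ℝ) by ring]
    have n1 : β ^ (ζ₁ - 2) * β = β ^ (ζ₁ - 1) := by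
      rw [← Real.rpow_add_one hβ.ne', show ζ₁ - 2 + 1 = ζ₁ - 1 by ring]
    have n2 : β ^ (ζ₂ - 2) * β = β ^ (ζ₂ - 1) := by
      rw [← Real.rpow_add_one hβ.ne', show ζ₂ - 2 + 1 = ζ₂ - 1 by ring]
    linear_combination (-(β * x₂ ^ (-1 : ℝ))) * key
      + (c₁ * ζ₁ * (1 - ζ₁) * β ^ (ζ₁ - 1)) * m1
      + (c₂ * ζ₂ * (1 - ζ₂) * β ^ (ζ₂ - 1)) * m2
      + (c₁ * ζ₁ * (ζ₁ - 1) * x₂ ^ (-1 : ℝ)) * n1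
      + (c₂ * ζ₂ * (ζ₂ - 1) * x₂ ^ (-1 : ℝ)) * n2
  refine ⟨hD11, ?_, hD22, ?_, hD12⟩
  · rw [hD11, hD22]; ring
  · rw [hD11, hD12]; ring
end
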